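/- arXiv:2307.07279 — 5 statements merged into one kernel-verified Lean document; each statement's English description precedes it below -/
import Mathlib

section
/- Let G be a connected bipartite finite simple graph with at least 2 vertices and let v be a vertex of G. Then v is an L-branch leaf of some BFS ordering of G if and only if there exists a vertex r ≠ v such that for every vertex w ≠ v, the vertex-deleted graph G − v contains an r–w path of length dist_G(r,w) (equivalently, dist_{G−v}(r,w) = dist_G(r,w) for all w ≠ v). -/
open SimpleGraph

variable {V : Type*}

/-- A generic search (GS) ordering: every vertex other than the first has an
earlier neighbor. -/
def IsGSOrdering [Fintype V] (G : SimpleGraph V) (σ : Fin (Fintype.card V) ≃ V) : Prop :=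
  ∀ w : V, (σ.symm w).val ≠ 0 → ∃ u : V, σ.symm u < σ.symm w ∧ G.Adj u w

/-- DFS ordering (Corneil–Krueger four-point characterization). -/
def IsDFSOrdering [Fintype V] (G : SimpleGraph V) (σ : Fin (Fintype.card V) ≃ V) : Prop :=
  IsGSOrdering G σ ∧ ∀ a b c : V, σ.symm a < σ.symm b → σ.symm b < σ.symm c →
    G.Adj a c → ¬ G.Adj a b →
      ∃ d : V, σ.symm a < σ.symm d ∧ σ.symm d < σ.symm b ∧ G.Adj d b

/-- BFS ordering (Corneil–Krueger four-point characterization). -/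
def IsBFSOrdering [Fintype V] (G : SimpleGraph V) (σ : Fin (Fintype.card V) ≃ V) : Prop :=
  IsGSOrdering G σ ∧ ∀ a b c : V, σ.symm a < σ.symm b → σ.symm b < σ.symm c →
    G.Adj a c → ¬ G.Adj a b →
      ∃ d : V, σ.symm d < σ.symm a ∧ G.Adj d b

/-- LDFS ordering (Corneil–Krueger four-point characterization). -/
def IsLDFSOrdering [Fintype V] (G : SimpleGraph V) (σ : Fin (Fintype.card V) ≃ V) : Prop :=
  IsGSOrdering G σ ∧ ∀ a b c : V, σ.symm a < σ.symm b → σ.symm b < σ.symm c →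
    G.Adj a c → ¬ G.Adj a b →
      ∃ d : V, σ.symm a < σ.symm d ∧ σ.symm d < σ.symm b ∧ G.Adj d b ∧ ¬ G.Adj d c

/-- MNS ordering (Corneil–Krueger four-point characterization). -/
def IsMNSOrdering [Fintype V] (G : SimpleGraph V) (σ : Fin (Fintype.card V) ≃ V) : Prop :=
  IsGSOrdering G σ ∧ ∀ a b c : V, σ.symm a < σ.symm b → σ.symm b < σ.symm c →
    G.Adj a c → ¬ G.Adj a b →
      ∃ d : V, σ.symm d < σ.symm b ∧ G.Adj d b ∧ ¬ G.Adj d c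

/-- MCS ordering: for positions `i < j`, the vertex at position `i` has at least as many
neighbors among the vertices at positions `< i` as the vertex at position `j` has. -/
def IsMCSOrdering [Fintype V] (G : SimpleGraph V) (σ : Fin (Fintype.card V) ≃ V) : Prop :=
  ∀ i j : Fin (Fintype.card V), i < j →
    Nat.card {k : Fin (Fintype.card V) // k < i ∧ G.Adj (σ k) (σ j)} ≤
    Nat.card {k : Fin (Fintype.card V) // k < i ∧ G.Adj (σ k) (σ i)}

/-- A perfect elimination ordering: the earlier neighbors of any vertex form a clique. -/
def IsPEO [Fintype V] (G : SimpleGraph V) (σ : Fin (Fintype.card V) ≃ V) : Prop :=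
  ∀ u v w : V, σ.symm u < σ.symm w → σ.symm v < σ.symm w → u ≠ v →
    G.Adj u w → G.Adj v w → G.Adj u v

/-- `u` is the F-parent of `v`: `v` is not the first vertex and `u` is the earliest
neighbor of `v` in the ordering. -/
def FParent [Fintype V] (G : SimpleGraph V) (σ : Fin (Fintype.card V) ≃ V) (u v : V) : Prop :=
  (σ.symm v).val ≠ 0 ∧ G.Adj u v ∧ ∀ w : V, G.Adj w v → σ.symm u ≤ σ.symm w

/-- `u` is the L-parent of `v`: `v` is not the first vertex and `u` is the last
neighbor of `v` occurring before `v` in the ordering. -/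
def LParent [Fintype V] (G : SimpleGraph V) (σ : Fin (Fintype.card V) ≃ V) (u v : V) : Prop :=
  (σ.symm v).val ≠ 0 ∧ G.Adj u v ∧ σ.symm u < σ.symm v ∧
    ∀ w : V, G.Adj w v → σ.symm w < σ.symm v → σ.symm w ≤ σ.symm u

/-- `v` is an F-branch leaf: `v` is not the first vertex and is the F-parent of no vertex. -/
def FBranchLeaf [Fintype V] (G : SimpleGraph V) (σ : Fin (Fintype.card V) ≃ V) (v : V) : Prop :=
  (σ.symm v).val ≠ 0 ∧ ∀ w : V, ¬ FParent G σ v w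

/-- `v` is the F-root leaf: `v` is the first vertex and is the F-parent of exactly one vertex. -/
def FRootLeaf [Fintype V] (G : SimpleGraph V) (σ : Fin (Fintype.card V) ≃ V) (v : V) : Prop :=
  (σ.symm v).val = 0 ∧ ∃! w : V, FParent G σ v w

/-- `v` is an L-branch leaf: `v` is not the first vertex and is the L-parent of no vertex. -/
def LBranchLeaf [Fintype V] (G : SimpleGraph V) (σ : Fin (Fintype.card V) ≃ V) (v : V) : Prop :=
  (σ.symm v).val ≠ 0 ∧ ∀ w : V, ¬ LParent G σ v w

/-- `v` is the L-root leaf: `v` is the first vertex and is the L-parent of exactly one vertex. -/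
def LRootLeaf [Fintype V] (G : SimpleGraph V) (σ : Fin (Fintype.card V) ≃ V) (v : V) : Prop :=
  (σ.symm v).val = 0 ∧ ∃! w : V, LParent G σ v w

/-- `v` is an L-leaf: the L-root leaf or an L-branch leaf. -/
def LLeaf [Fintype V] (G : SimpleGraph V) (σ : Fin (Fintype.card V) ≃ V) (v : V) : Prop :=
  LRootLeaf G σ v ∨ LBranchLeaf G σ v

/-- `v` is the end-vertex (last vertex) of the ordering `σ`. -/
def IsEndVertex [Fintype V] (σ : Fin (Fintype.card V) ≃ V) (v : V) : Prop :=
  (σ.symm v).val = Fintype.card V - 1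

/-- `v` is a cut vertex: deleting `v` yields a disconnected graph. -/
def CutVertex (G : SimpleGraph V) (v : V) : Prop :=
  ¬ (G.induce {w : V | w ≠ v}).Connected

/-- A graph is chordal if every cycle of length at least 4 has a chord, i.e. an edge of the
graph joining two vertices of the cycle which is not an edge of the cycle. -/
def IsChordal (G : SimpleGraph V) : Prop :=
  ∀ ⦃v : V⦄ (w : G.Walk v v), w.IsCycle → 4 ≤ w.length →
    ∃ x y : V, x ∈ w.support ∧ y ∈ w.support ∧ G.Adj x y ∧ s(x, y) ∉ w.edges


namespace Stmt12

open Finset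

section Basics
variable {G : SimpleGraph V}

open Finset

variable {G : SimpleGraph V}

lemma dist_getVert_le (hG : G.Connected) {x y : V} (p : G.Walk x y) (i : ℕ) :
    G.dist x (p.getVert i) ≤ i := by
  induction p generalizing i with
  | nil => exact le_trans (Nat.le_of_eq (SimpleGraph.dist_eq_zero_iff_eq_or_not_reachable.mpr (Or.inl rfl))) (Nat.zero_le i)
  | @cons x b y h q ih =>
    cases i with
    | zero => simp
    | succ i =>
      rw [Walk.getVert_cons_succ]
      calc G.dist x (q.getVert i) ≤ G.dist x b + G.dist b (q.getVert i) := hG.dist_triangle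
        _ ≤ 1 + i := by
            have h1 : G.dist x b ≤ 1 := by simpa using SimpleGraph.dist_le h.toWalk
            exact Nat.add_le_add h1 (ih i)
        _ = i + 1 := Nat.add_comm _ _

lemma dist_getVert_right (hG : G.Connected) {x y : V} (p : G.Walk x y) (i : ℕ) :
    G.dist (p.getVert i) y ≤ p.length - i := by
  induction p generalizing i with
  | nil => exact le_trans (Nat.le_of_eq (SimpleGraph.dist_eq_zero_iff_eq_or_not_reachable.mpr (Or.inl rfl))) (Nat.zero_le _)
  | @cons x b y h q ih =>
    cases i with
    | zero =>
      simpa using SimpleGraph.dist_le (Walk.cons h q)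
    | succ i =>
      rw [Walk.getVert_cons_succ]
      simpa [Walk.length_cons, Nat.succ_sub_succ] using ih i

lemma shortest_getVert (hG : G.Connected) {x y : V} {p : G.Walk x y}
    (hp : p.length = G.dist x y) {i : ℕ} (hi : i ≤ p.length) :
    G.dist x (p.getVert i) = i := by
  have h1 := dist_getVert_le hG p i
  have h2 := dist_getVert_right hG p i
  have h3 : G.dist x y ≤ G.dist x (p.getVert i) + G.dist (p.getVert i) y := hG.dist_triangle
  omega

lemma adj_dist_le (hG : G.Connected) {r x y : V} (h : G.Adj x y) :
    G.dist r y ≤ G.dist r x + 1 := by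
  have h2 : G.dist r y ≤ G.dist r x + G.dist x y := hG.dist_triangle
  have h1 : G.dist x y ≤ 1 := by simpa using SimpleGraph.dist_le h.toWalk
  omega

lemma exists_parent (hG : G.Connected) {r w : V} (h : G.dist r w ≠ 0) :
    ∃ u, G.Adj u w ∧ G.dist r u + 1 = G.dist r w := by
  obtain ⟨p, hp⟩ := (hG r w).exists_walk_length_eq_dist
  have hpos : 0 < p.length := by omega
  refine ⟨p.getVert (p.length - 1), ?_, ?_⟩
  · have h2 := p.adj_getVert_succ (i := p.length - 1) (by omega)
    rwa [show p.length - 1 + 1 = p.length by omega, Walk.getVert_length] at h2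
  · rw [shortest_getVert hG hp (by omega)]; omega

lemma parity_walk (C : G.Coloring (Fin 2)) {x y : V} (p : G.Walk x y) :
    (C x = C y) ↔ Even p.length := by
  induction p with
  | nil => simp
  | @cons x b y h q ih =>
    have key : ∀ a c e : Fin 2, a ≠ c → ((a = e) ↔ ¬(c = e)) := by decide
    rw [Walk.length_cons, Nat.even_add_one, ← ih, key _ _ _ (C.valid h)]

lemma adj_dist_ne (hG : G.Connected) (hbip : G.Colorable 2) (r : V) {x y : V}
    (h : G.Adj x y) : G.dist r x ≠ G.dist r y := by
  obtain ⟨C⟩ := hbip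
  obtain ⟨p, hp⟩ := (hG r x).exists_walk_length_eq_dist
  obtain ⟨q, hq⟩ := (hG r y).exists_walk_length_eq_dist
  intro hd
  have h1 := parity_walk C p
  have h2 := parity_walk C q
  rw [hp] at h1; rw [hq] at h2
  rw [hd] at h1
  have key : ∀ a b c : Fin 2, ((a = b) ↔ (a = c)) → b = c := by decide
  exact C.valid h (key _ _ _ (h1.trans h2.symm))

lemma induce_dist_le {s : Set V} {a b : ↥s} (hreach : (G.induce s).Reachable a b) :
    G.dist ↑a ↑b ≤ (G.induce s).dist a b := by
  obtain ⟨q, hq⟩ := hreach.exists_walk_length_eq_dist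
  have h := SimpleGraph.dist_le (q.map (SimpleGraph.Embedding.induce s).toHom)
  exact le_of_le_of_eq h (by rw [Walk.length_map, hq])


end Basics

section Fwd
variable {G : SimpleGraph V}

open Finset

variable {G : SimpleGraph V}


open scoped Classical in
noncomputable def earlier [Fintype V] (G : SimpleGraph V) (σ : Fin (Fintype.card V) ≃ V)
    (w : V) : Finset (Fin (Fintype.card V)) :=
  Finset.univ.filter (fun j => j < σ.symm w ∧ G.Adj (σ j) w)

noncomputable def firstNbr [Fintype V] (G : SimpleGraph V) (σ : Fin (Fintype.card V) ≃ V)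
    (w : V) : V :=
  if h : (earlier G σ w).Nonempty then σ ((earlier G σ w).min' h) else w

variable [Fintype V] {σ : Fin (Fintype.card V) ≃ V}

lemma earlier_nonempty (hgs : IsGSOrdering G σ) {w : V} (hw : (σ.symm w).val ≠ 0) :
    (earlier G σ w).Nonempty := by
  obtain ⟨u, hu, hadj⟩ := hgs w hw
  exact ⟨σ.symm u, by simp [earlier, hu, hadj]⟩

lemma firstNbr_spec {w : V} (h : (earlier G σ w).Nonempty) :
    σ.symm (firstNbr G σ w) < σ.symm w ∧ G.Adj (firstNbr G σ w) w := by
  rw [firstNbr, dif_pos h]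
  have := (earlier G σ w).min'_mem h
  simp only [earlier, Finset.mem_filter] at this
  simp only [Equiv.symm_apply_apply]
  exact this.2

lemma firstNbr_min {w : V} (h : (earlier G σ w).Nonempty) {u : V} (hadj : G.Adj u w)
    (hu : σ.symm u < σ.symm w) : σ.symm (firstNbr G σ w) ≤ σ.symm u := by
  rw [firstNbr, dif_pos h]
  simp only [Equiv.symm_apply_apply]
  exact (earlier G σ w).min'_le _ (by simp [earlier, hu, hadj])

lemma firstNbr_mono (hb : IsBFSOrdering G σ) {a b : V} (ha : (σ.symm a).val ≠ 0)
    (hab : σ.symm a < σ.symm b) :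
    σ.symm (firstNbr G σ a) ≤ σ.symm (firstNbr G σ b) := by
  have hbne : (σ.symm b).val ≠ 0 := by
    have : (σ.symm a).val < (σ.symm b).val := hab
    omega
  have hA := earlier_nonempty hb.1 ha
  have hB := earlier_nonempty hb.1 hbne
  by_contra hlt
  push_neg at hlt
  have h1 : ¬ G.Adj (firstNbr G σ b) a := fun hadj =>
    absurd (firstNbr_min hA hadj (lt_trans hlt (firstNbr_spec hA).1)) (not_le.mpr hlt)
  obtain ⟨e, he, headj⟩ := hb.2 (firstNbr G σ b) a b
    (lt_trans hlt (firstNbr_spec hA).1) hab (firstNbr_spec hB).2 h1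
  exact absurd (firstNbr_min hA headj (lt_trans (lt_trans he hlt) (firstNbr_spec hA).1))
    (not_le.mpr (lt_trans he hlt))

noncomputable def cfun [Fintype V] (G : SimpleGraph V) (σ : Fin (Fintype.card V) ≃ V)
    (i : Fin (Fintype.card V)) : ℕ :=
  if h : σ.symm (firstNbr G σ (σ i)) < i then cfun G σ (σ.symm (firstNbr G σ (σ i))) + 1 else 0
termination_by i.val
decreasing_by exact h

lemma cfun_zero {i : Fin (Fintype.card V)} (hi : i.val = 0) : cfun G σ i = 0 := by
  rw [cfun, dif_neg]
  intro h
  have : (σ.symm (firstNbr G σ (σ i))).val < i.val := h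
  omega

lemma cfun_succ (hgs : IsGSOrdering G σ) {i : Fin (Fintype.card V)} (hi : i.val ≠ 0) :
    cfun G σ i = cfun G σ (σ.symm (firstNbr G σ (σ i))) + 1 := by
  have hne : (earlier G σ (σ i)).Nonempty := earlier_nonempty hgs (by simpa using hi)
  have := (firstNbr_spec hne).1
  rw [cfun, dif_pos (by simpa using this)]

lemma cfun_mono (hb : IsBFSOrdering G σ) : ∀ m : ℕ, ∀ j i : Fin (Fintype.card V),
    j.val = m → i ≤ j → cfun G σ i ≤ cfun G σ j := by
  intro m
  induction m using Nat.strong_induction_on with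
  | _ m ih =>
    intro j i hj hij
    rcases eq_or_lt_of_le hij with h | h
    · rw [h]
    · have hjne : j.val ≠ 0 := by have : i.val < j.val := h; omega
      rw [cfun_succ hb.1 hjne]
      by_cases hi0 : i.val = 0
      · rw [cfun_zero hi0]; omega
      · rw [cfun_succ hb.1 hi0]
        have hmono : σ.symm (firstNbr G σ (σ i)) ≤ σ.symm (firstNbr G σ (σ j)) :=
          firstNbr_mono hb (by simpa using hi0) (by simpa using h)
        have hjlt : σ.symm (firstNbr G σ (σ j)) < j := by
          have hne : (earlier G σ (σ j)).Nonempty := earlier_nonempty hb.1 (by simpa using hjne)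
          simpa using (firstNbr_spec hne).1
        have := ih (σ.symm (firstNbr G σ (σ j))).val (by omega) _ _ rfl hmono
        omega

lemma dist_le_cfun (hG : G.Connected) (hb : IsBFSOrdering G σ) (hn : 0 < Fintype.card V) :
    ∀ m : ℕ, ∀ i : Fin (Fintype.card V), i.val = m → G.dist (σ ⟨0, hn⟩) (σ i) ≤ cfun G σ i := by
  intro m
  induction m using Nat.strong_induction_on with
  | _ m ih =>
    intro i hi
    by_cases hi0 : i.val = 0
    · have : i = ⟨0, hn⟩ := Fin.ext hi0
      rw [this, cfun_zero rfl, SimpleGraph.dist_self]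
    · rw [cfun_succ hb.1 hi0]
      have hne : (earlier G σ (σ i)).Nonempty := earlier_nonempty hb.1 (by simpa using hi0)
      obtain ⟨hlt, hadj⟩ := firstNbr_spec hne
      have h1 : G.dist (σ ⟨0, hn⟩) (σ i) ≤ G.dist (σ ⟨0, hn⟩) (firstNbr G σ (σ i)) + 1 :=
        adj_dist_le hG hadj
      have hlt' : (σ.symm (firstNbr G σ (σ i))).val < i.val := by simpa using hlt
      have h2 := ih (σ.symm (firstNbr G σ (σ i))).val (by omega) _ rfl
      rw [Equiv.apply_symm_apply] at h2
      omega

lemma cfun_le_dist (hG : G.Connected) (hb : IsBFSOrdering G σ) (hn : 0 < Fintype.card V) :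
    ∀ k : ℕ, ∀ w : V, G.dist (σ ⟨0, hn⟩) w = k → cfun G σ (σ.symm w) ≤ k := by
  intro k
  induction k using Nat.strong_induction_on with
  | _ k ih =>
    intro w hw
    by_cases hk0 : k = 0
    · subst hk0
      have : σ ⟨0, hn⟩ = w := hG.dist_eq_zero_iff.mp hw
      rw [← this, Equiv.symm_apply_apply, cfun_zero rfl]
    · obtain ⟨x, hadj, hx⟩ := exists_parent hG (r := σ ⟨0, hn⟩) (by rw [hw]; exact hk0)
      have hxd : G.dist (σ ⟨0, hn⟩) x = k - 1 := by omega
      have hcx : cfun G σ (σ.symm x) ≤ k - 1 := ih (k - 1) (by omega) x hxd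
      have hwne : (σ.symm w).val ≠ 0 := by
        intro h0
        have : σ.symm w = ⟨0, hn⟩ := Fin.ext h0
        have : w = σ ⟨0, hn⟩ := by rw [← this, Equiv.apply_symm_apply]
        rw [this, SimpleGraph.dist_self] at hw; omega
      rcases lt_trichotomy (σ.symm x) (σ.symm w) with h | h | h
      · have hne : (earlier G σ w).Nonempty := earlier_nonempty hb.1 hwne
        have hmin : σ.symm (firstNbr G σ w) ≤ σ.symm x := firstNbr_min hne hadj h
        have : cfun G σ (σ.symm (firstNbr G σ w)) ≤ cfun G σ (σ.symm x) :=
          cfun_mono hb _ _ _ rfl hmin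
        have hsucc : cfun G σ (σ.symm w) = cfun G σ (σ.symm (firstNbr G σ (σ (σ.symm w)))) + 1 :=
          cfun_succ hb.1 hwne
        rw [Equiv.apply_symm_apply] at hsucc
        omega
      · have : x = w := σ.symm.injective h
        rw [this] at hxd; omega
      · have : cfun G σ (σ.symm w) ≤ cfun G σ (σ.symm x) := cfun_mono hb _ _ _ rfl (le_of_lt h)
        omega

lemma cfun_eq_dist (hG : G.Connected) (hb : IsBFSOrdering G σ) (hn : 0 < Fintype.card V)
    (w : V) : cfun G σ (σ.symm w) = G.dist (σ ⟨0, hn⟩) w :=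
  le_antisymm (cfun_le_dist hG hb hn _ w rfl)
    (by simpa using dist_le_cfun hG hb hn _ (σ.symm w) rfl)

lemma dist_mono (hG : G.Connected) (hb : IsBFSOrdering G σ) (hn : 0 < Fintype.card V)
    {a b : V} (hab : σ.symm a ≤ σ.symm b) :
    G.dist (σ ⟨0, hn⟩) a ≤ G.dist (σ ⟨0, hn⟩) b := by
  rw [← cfun_eq_dist hG hb hn, ← cfun_eq_dist hG hb hn]
  exact cfun_mono hb _ _ _ rfl hab


set_option maxHeartbeats 800000 in
lemma forward (hG : G.Connected) (hbip : G.Colorable 2) (hn : 0 < Fintype.card V)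
    (hb : IsBFSOrdering G σ) {v : V} (hl : LBranchLeaf G σ v) :
    ∃ r : V, ∃ hr : r ≠ v, ∀ w : V, ∀ hw : w ≠ v,
      (G.induce {u : V | u ≠ v}).Reachable ⟨r, hr⟩ ⟨w, hw⟩ ∧
      (G.induce {u : V | u ≠ v}).dist ⟨r, hr⟩ ⟨w, hw⟩ = G.dist r w := by
  obtain ⟨r, hrdef⟩ : ∃ r, r = σ ⟨0, hn⟩ := ⟨_, rfl⟩
  have hrsymm : σ.symm r = ⟨0, hn⟩ := by rw [hrdef, Equiv.symm_apply_apply]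
  have hrv : r ≠ v := by
    intro h
    apply hl.1
    rw [← h, hrsymm]
  have hrvmem : r ∈ {u : V | u ≠ v} := hrv
  have key : ∀ k : ℕ, ∀ w : V, ∀ hw : w ≠ v, G.dist r w = k →
      ∃ q : (G.induce {u : V | u ≠ v}).Walk ⟨r, hrvmem⟩ ⟨w, hw⟩, q.length = k := by
    intro k
    induction k using Nat.strong_induction_on with
    | _ k ih =>
      intro w hw hdw
      by_cases hk0 : k = 0
      · subst hk0
        have : r = w := hG.dist_eq_zero_iff.mp hdw
        subst this
        exact ⟨Walk.nil, rfl⟩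
      · by_cases hex : ∃ x, G.Adj x w ∧ G.dist r x = k - 1 ∧ x ≠ v
        · obtain ⟨x, hadj, hxd, hxv⟩ := hex
          obtain ⟨q, hq⟩ := ih (k - 1) (by omega) x hxv hxd
          have hadj' : (G.induce {u : V | u ≠ v}).Adj ⟨x, hxv⟩ ⟨w, hw⟩ := by
            simpa using hadj
          refine ⟨q.concat hadj', ?_⟩
          rw [Walk.length_concat, hq]; omega
        · exfalso
          obtain ⟨u, huadj, hud⟩ := exists_parent hG (r := r) (w := w) (by rw [hdw]; exact hk0)
          have huv : u = v := by
            by_contra hne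
            exact hex ⟨u, huadj, by omega, hne⟩
          subst huv
          have hvd : G.dist r u = k - 1 := by omega
          apply hl.2 w
          have hwne : (σ.symm w).val ≠ 0 := by
            intro hz
            have : σ.symm w = ⟨0, hn⟩ := Fin.ext hz
            have : w = r := by rw [hrdef, ← this, Equiv.apply_symm_apply]
            rw [this, SimpleGraph.dist_self] at hdw; omega
          refine ⟨hwne, huadj, ?_, ?_⟩
          · by_contra hle
            push_neg at hle
            have := dist_mono hG hb hn hle
            rw [← hrdef] at this
            rw [hdw, hvd] at this
            omega
          · intro x hxadj hxw
            have hd1 : G.dist r x ≤ G.dist r w := by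
              have := dist_mono hG hb hn (le_of_lt hxw)
              rwa [← hrdef] at this
            have hd2 : G.dist r w ≤ G.dist r x + 1 := adj_dist_le hG hxadj
            have hd3 : G.dist r x ≠ G.dist r w := adj_dist_ne hG hbip r hxadj
            have hxd : G.dist r x = k - 1 := by omega
            have hxu : x = u := by
              by_contra hne
              exact hex ⟨x, hxadj, hxd, hne⟩
            rw [hxu]
  refine ⟨r, hrv, fun w hw => ?_⟩
  obtain ⟨q, hq⟩ := key (G.dist r w) w hw rfl
  refine ⟨⟨q⟩, le_antisymm (by rw [← hq]; exact SimpleGraph.dist_le q) (induce_dist_le ⟨q⟩)⟩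


end Fwd

section Bwd
variable {G : SimpleGraph V}

open Finset

variable {G : SimpleGraph V}


open scoped Classical in
noncomputable def parentsF [Fintype V] (G : SimpleGraph V) (r x : V) : Finset V :=
  Finset.univ.filter (fun u => G.Adj u x ∧ G.dist r u + 1 = G.dist r x)

noncomputable def mpOf [Fintype V] (G : SimpleGraph V) (r : V) (f : V → ℕ) (x : V) : ℕ :=
  if h : (parentsF G r x).Nonempty then (parentsF G r x).inf' h f else 0

open scoped Classical in
noncomputable def rnk [Fintype V] (G : SimpleGraph V) (r : V) (idx : V → ℕ) (w : V) : ℕ :=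
  (Finset.univ.filter (fun x => G.dist r x = G.dist r w ∧
    (mpOf G r (fun u => if h : G.dist r u < G.dist r w then rnk G r idx u else 0) x <
       mpOf G r (fun u => if h : G.dist r u < G.dist r w then rnk G r idx u else 0) w ∨
     (mpOf G r (fun u => if h : G.dist r u < G.dist r w then rnk G r idx u else 0) x =
       mpOf G r (fun u => if h : G.dist r u < G.dist r w then rnk G r idx u else 0) w ∧
      idx x < idx w)))).card
termination_by G.dist r w
decreasing_by all_goals exact h

noncomputable def mpT [Fintype V] (G : SimpleGraph V) (r : V) (idx : V → ℕ) (x : V) : ℕ :=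
  mpOf G r (rnk G r idx) x

def keyLt [Fintype V] (G : SimpleGraph V) (r : V) (idx : V → ℕ) (x y : V) : Prop :=
  mpT G r idx x < mpT G r idx y ∨ (mpT G r idx x = mpT G r idx y ∧ idx x < idx y)

variable [Fintype V] {r : V} {idx : V → ℕ}

lemma mpOf_congr {f g : V → ℕ} {x : V} (h : ∀ u ∈ parentsF G r x, f u = g u) :
    mpOf G r f x = mpOf G r g x := by
  rw [mpOf, mpOf]
  split
  · exact Finset.inf'_congr _ rfl h
  · rfl

lemma mem_parentsF {u x : V} : u ∈ parentsF G r x ↔ G.Adj u x ∧ G.dist r u + 1 = G.dist r x := by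
  simp [parentsF]

open scoped Classical in
lemma rnk_eq (w : V) : rnk G r idx w =
    (Finset.univ.filter (fun x => G.dist r x = G.dist r w ∧ keyLt G r idx x w)).card := by
  rw [rnk]
  congr 1
  apply Finset.filter_congr
  intro x _
  have hmp : ∀ y : V, G.dist r y = G.dist r w →
      mpOf G r (fun u => if h : G.dist r u < G.dist r w then rnk G r idx u else 0) y =
      mpT G r idx y := by
    intro y hy
    apply mpOf_congr
    intro u hu
    rw [mem_parentsF] at hu
    rw [dif_pos (by omega)]
  constructor
  · rintro ⟨hd, h⟩
    rw [hmp x hd, hmp w rfl] at h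
    exact ⟨hd, h⟩
  · rintro ⟨hd, h⟩
    rw [keyLt] at h
    rw [← hmp x hd, ← hmp w rfl] at h
    exact ⟨hd, h⟩

section KeyProps

variable (hidx : ∀ x y : V, G.dist r x = G.dist r y → idx x = idx y → x = y)

lemma keyLt_irrefl (x : V) : ¬ keyLt G r idx x x := by
  rw [keyLt]; omega

lemma keyLt_trans {x y z : V} (h1 : keyLt G r idx x y) (h2 : keyLt G r idx y z) :
    keyLt G r idx x z := by
  rw [keyLt] at *; omega

include hidx in
lemma keyLt_total {x y : V} (hd : G.dist r x = G.dist r y) (hne : x ≠ y) :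
    keyLt G r idx x y ∨ keyLt G r idx y x := by
  by_contra h
  push_neg at h
  rw [keyLt, keyLt] at h
  have : idx x = idx y := by omega
  exact hne (hidx x y hd this)

include hidx in
lemma rnk_lt_iff {x y : V} (hd : G.dist r x = G.dist r y) (hne : x ≠ y) :
    rnk G r idx x < rnk G r idx y ↔ keyLt G r idx x y := by
  classical
  constructor
  · intro h
    rcases keyLt_total hidx hd hne with hk | hk
    · exact hk
    · exfalso
      -- then rnk y < rnk x, contradiction; prove the ⇐ direction generically below
      have : rnk G r idx y < rnk G r idx x := by
        rw [rnk_eq, rnk_eq]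
        apply Finset.card_lt_card
        constructor
        · intro z hz
          simp only [Finset.mem_filter] at hz ⊢
          exact ⟨hz.1, hz.2.1.trans hd.symm, keyLt_trans hz.2.2 hk⟩
        · intro hsub
          have hy : y ∈ Finset.univ.filter
              (fun z => G.dist r z = G.dist r x ∧ keyLt G r idx z x) := by
            simp only [Finset.mem_filter]
            exact ⟨Finset.mem_univ _, hd.symm, hk⟩
          have := hsub hy
          simp only [Finset.mem_filter] at this
          exact keyLt_irrefl y this.2.2
      omega
  · intro hk
    rw [rnk_eq, rnk_eq]
    apply Finset.card_lt_card
    constructor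
    · intro z hz
      simp only [Finset.mem_filter] at hz ⊢
      exact ⟨hz.1, hz.2.1.trans hd, keyLt_trans hz.2.2 hk⟩
    · intro hsub
      have hx : x ∈ Finset.univ.filter
          (fun z => G.dist r z = G.dist r y ∧ keyLt G r idx z y) := by
        simp only [Finset.mem_filter]
        exact ⟨Finset.mem_univ _, hd, hk⟩
      have := hsub hx
      simp only [Finset.mem_filter] at this
      exact keyLt_irrefl x this.2.2

include hidx in
lemma rnk_inj {x y : V} (hd : G.dist r x = G.dist r y) (hr : rnk G r idx x = rnk G r idx y) :
    x = y := by
  by_contra hne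
  rcases keyLt_total hidx hd hne with hk | hk
  · have := (rnk_lt_iff hidx hd hne).mpr hk; omega
  · have := (rnk_lt_iff hidx hd.symm (Ne.symm hne)).mpr hk; omega

lemma rnk_lt_card (w : V) : rnk G r idx w < Fintype.card V := by
  classical
  rw [rnk_eq]
  have h1 : (Finset.univ.filter (fun x => G.dist r x = G.dist r w ∧ keyLt G r idx x w)) ⊆
      Finset.univ.erase w := by
    intro z hz
    simp only [Finset.mem_filter] at hz
    rw [Finset.mem_erase]
    refine ⟨fun h => ?_, Finset.mem_univ _⟩
    subst h
    exact keyLt_irrefl z hz.2.2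
  calc (Finset.univ.filter _).card ≤ (Finset.univ.erase w).card := Finset.card_le_card h1
    _ < Finset.univ.card := Finset.card_erase_lt_of_mem (Finset.mem_univ w)
    _ = Fintype.card V := Finset.card_univ

end KeyProps

open scoped Classical in
noncomputable def idxF [Fintype V] (G : SimpleGraph V) {r v : V} (p : G.Walk r v) (w : V) : ℕ :=
  if w = p.getVert (G.dist r w) then 0 else (Fintype.equivFin V w).val + 1

lemma idxF_inj [Fintype V] {r v : V} {p : G.Walk r v} {x y : V}
    (hd : G.dist r x = G.dist r y) (h : idxF G p x = idxF G p y) : x = y := by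
  rw [idxF, idxF] at h
  split_ifs at h with h1 h2
  · rw [h1, h2, hd]
  · have : x = y := (Fintype.equivFin V).injective (Fin.val_injective (by omega))
    exact this

lemma flt_aux {n dx dy rx ry : ℕ} (hrx : rx < n) (hry : ry < n) :
    n * dx + rx < n * dy + ry ↔ (dx < dy ∨ (dx = dy ∧ rx < ry)) := by
  rcases Nat.lt_trichotomy dx dy with h | h | h
  · have h2 : n * dx + n ≤ n * dy := by
      have := Nat.mul_le_mul_left n (Nat.succ_le_of_lt h)
      rwa [Nat.mul_succ] at this
    omega
  · subst h; omega
  · have h2 : n * dy + n ≤ n * dx := by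
      have := Nat.mul_le_mul_left n (Nat.succ_le_of_lt h)
      rwa [Nat.mul_succ] at this
    omega

set_option maxHeartbeats 1600000 in
lemma backward (hG : G.Connected) (hbip : G.Colorable 2) (hn : 2 ≤ Fintype.card V)
    (v : V) (r : V) (hr : r ≠ v)
    (H : ∀ w : V, ∀ hw : w ≠ v,
        (G.induce {u : V | u ≠ v}).Reachable ⟨r, hr⟩ ⟨w, hw⟩ ∧
        (G.induce {u : V | u ≠ v}).dist ⟨r, hr⟩ ⟨w, hw⟩ = G.dist r w) :
    ∃ σ : Fin (Fintype.card V) ≃ V, IsBFSOrdering G σ ∧ LBranchLeaf G σ v := by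
  classical
  have hvr : v ≠ r := Ne.symm hr
  have hDpos : 0 < G.dist r v := hG.pos_dist_of_ne hr
  obtain ⟨p, hp⟩ := (hG r v).exists_walk_length_eq_dist
  set idx : V → ℕ := idxF G p with hidx_def
  have hidx : ∀ x y : V, G.dist r x = G.dist r y → idx x = idx y → x = y :=
    fun x y hd h => idxF_inj hd h
  set n := Fintype.card V with hn_def
  set f : V → ℕ := fun w => n * G.dist r w + rnk G r idx w with hf_def
  have hfd : ∀ w, f w = n * G.dist r w + rnk G r idx w := fun _ => rfl
  have key_lt : ∀ x y : V, f x < f y ↔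
      (G.dist r x < G.dist r y ∨ (G.dist r x = G.dist r y ∧ rnk G r idx x < rnk G r idx y)) :=
    fun x y => flt_aux (rnk_lt_card x) (rnk_lt_card y)
  have hfinj : Function.Injective f := by
    intro x y h
    have h1 : ¬ f x < f y := by omega
    have h2 : ¬ f y < f x := by omega
    rw [key_lt] at h1 h2
    push_neg at h1 h2
    have hd : G.dist r x = G.dist r y := by omega
    have hrk : rnk G r idx x = rnk G r idx y := by
      have := h1.2 hd
      have := h2.2 hd.symm
      omega
    exact rnk_inj hidx hd hrk
  have hcard : (Finset.univ.image f).card = n := by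
    rw [Finset.card_image_of_injective _ hfinj, Finset.card_univ]
  let iso : Fin n ≃o {x // x ∈ Finset.univ.image f} := Finset.orderIsoOfFin _ hcard
  let e2 : {x // x ∈ Finset.univ.image f} ≃ V :=
    (Equiv.subtypeEquivRight (fun x => by
        simp [Finset.mem_image, Set.mem_range])).trans (Equiv.ofInjective f hfinj).symm
  refine ⟨iso.toEquiv.trans e2, ?_⟩
  set σ : Fin n ≃ V := iso.toEquiv.trans e2 with hσ_def
  have hval : ∀ a : V, ((e2.symm a : {x // x ∈ Finset.univ.image f}) : ℕ) = f a := by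
    intro a
    have h0 : e2.symm a = (Equiv.subtypeEquivRight (fun x => by
        simp [Finset.mem_image, Set.mem_range])).symm ((Equiv.ofInjective f hfinj) a) := rfl
    rw [h0]
    simp [Equiv.subtypeEquivRight, Equiv.ofInjective_apply]
    rfl
  have hlt : ∀ a b : V, σ.symm a < σ.symm b ↔ f a < f b := by
    intro a b
    have h1 : σ.symm a = iso.symm (e2.symm a) := rfl
    have h2 : σ.symm b = iso.symm (e2.symm b) := rfl
    rw [h1, h2, iso.symm.lt_iff_lt, ← Subtype.coe_lt_coe, hval, hval]
  have hle : ∀ a b : V, σ.symm a ≤ σ.symm b ↔ f a ≤ f b := by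
    intro a b
    rw [← not_lt, ← not_lt]
    exact not_congr (hlt b a)
  -- f r = 0
  have hrnkr : rnk G r idx r = 0 := by
    rw [rnk_eq, Finset.card_eq_zero, Finset.filter_eq_empty_iff]
    rintro x - ⟨hd, hk⟩
    rw [SimpleGraph.dist_self] at hd
    have : r = x := hG.dist_eq_zero_iff.mp hd
    subst this
    exact keyLt_irrefl r hk
  have hfr : f r = 0 := by rw [hfd, SimpleGraph.dist_self, hrnkr]; simp
  have hpos : 0 < n := by omega
  have hsymm_r : (σ.symm r).val = 0 := by
    have hall : ∀ w : V, σ.symm r ≤ σ.symm w := fun w =>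
      (hle r w).mpr (by rw [hfr]; exact Nat.zero_le _)
    have := hall (σ ⟨0, hpos⟩)
    rw [Equiv.symm_apply_apply] at this
    exact Nat.le_zero.mp this
  have hne_r : ∀ w : V, (σ.symm w).val ≠ 0 ↔ w ≠ r := by
    intro w
    constructor
    · intro h hw
      rw [hw] at h
      exact h hsymm_r
    · intro h h0
      apply h
      apply σ.symm.injective
      exact Fin.ext (by rw [h0, hsymm_r])
  have hdist_ne : ∀ w : V, w ≠ r → G.dist r w ≠ 0 := by
    intro w hw h
    exact hw (hG.dist_eq_zero_iff.mp h).symm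
  have hparents_ne : ∀ w : V, G.dist r w ≠ 0 → (parentsF G r w).Nonempty := by
    intro w h
    obtain ⟨u, hu1, hu2⟩ := exists_parent hG h
    exact ⟨u, mem_parentsF.mpr ⟨hu1, hu2⟩⟩
  have hmpT_le : ∀ c a : V, a ∈ parentsF G r c → mpT G r idx c ≤ rnk G r idx a := by
    intro c a ha
    rw [mpT, mpOf, dif_pos ⟨a, ha⟩]
    exact Finset.inf'_le _ ha
  have hmpT_eq : ∀ c : V, (h : (parentsF G r c).Nonempty) →
      ∃ pc ∈ parentsF G r c, mpT G r idx c = rnk G r idx pc := by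
    intro c h
    obtain ⟨pc, h1, h2⟩ := Finset.exists_mem_eq_inf' h (rnk G r idx)
    refine ⟨pc, h1, ?_⟩
    rw [mpT, mpOf, dif_pos h]
    exact h2
  -- GS
  have hGS : IsGSOrdering G σ := by
    intro w hw
    have hdw : G.dist r w ≠ 0 := hdist_ne w ((hne_r w).mp hw)
    obtain ⟨u, hu1, hu2⟩ := exists_parent hG hdw
    refine ⟨u, ?_, hu1⟩
    rw [hlt, key_lt]
    exact Or.inl (by omega)
  -- umin : the path vertices are first in their layers
  have humin : ∀ i : ℕ, ∀ x : V, i ≤ p.length → G.dist r x = i → x ≠ p.getVert i →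
      keyLt G r idx (p.getVert i) x := by
    intro i
    induction i with
    | zero =>
      intro x _ hx hne
      exact absurd (by rw [← hG.dist_eq_zero_iff.mp hx, Walk.getVert_zero]) hne
    | succ i ih =>
      intro x hi hx hne
      have hui : G.dist r (p.getVert i) = i := shortest_getVert hG hp (by omega)
      have hui1 : G.dist r (p.getVert (i + 1)) = i + 1 := shortest_getVert hG hp hi
      have hadj : G.Adj (p.getVert i) (p.getVert (i + 1)) := p.adj_getVert_succ (by omega)
      have hmem : p.getVert i ∈ parentsF G r (p.getVert (i + 1)) :=
        mem_parentsF.mpr ⟨hadj, by omega⟩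
      have hlb : ∀ z : V, G.dist r z = i + 1 → (hz : (parentsF G r z).Nonempty) →
          rnk G r idx (p.getVert i) ≤ mpT G r idx z := by
        intro z hz hnon
        obtain ⟨pz, hpz, heq⟩ := hmpT_eq z hnon
        rw [heq]
        rw [mem_parentsF] at hpz
        have hdz : G.dist r pz = i := by omega
        by_cases hpze : pz = p.getVert i
        · rw [hpze]
        · have hk := ih pz (by omega) hdz hpze
          exact le_of_lt ((rnk_lt_iff hidx (by rw [hui, hdz]) (fun hh => hpze hh.symm)).mpr hk)
      have hnon1 : (parentsF G r (p.getVert (i + 1))).Nonempty := ⟨_, hmem⟩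
      have hmp1 : mpT G r idx (p.getVert (i + 1)) = rnk G r idx (p.getVert i) :=
        le_antisymm (hmpT_le _ _ hmem) (hlb _ hui1 hnon1)
      have hnonx : (parentsF G r x).Nonempty := hparents_ne x (by omega)
      have hlbx : rnk G r idx (p.getVert i) ≤ mpT G r idx x := hlb x hx hnonx
      rw [keyLt]
      rcases lt_or_eq_of_le (le_trans (le_of_eq hmp1) hlbx) with h | h
    -- continue
      · exact Or.inl h
      · refine Or.inr ⟨h, ?_⟩
        have hidx1 : idx (p.getVert (i + 1)) = 0 := by
          rw [hidx_def, idxF, if_pos (by rw [hui1])]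
        have hidx2 : idx x ≠ 0 := by
          rw [hidx_def, idxF, if_neg]
          · omega
          · rw [hx]
            exact hne
        omega
  -- BFS four point
  have hBFS : ∀ a b c : V, σ.symm a < σ.symm b → σ.symm b < σ.symm c →
      G.Adj a c → ¬ G.Adj a b → ∃ e : V, σ.symm e < σ.symm a ∧ G.Adj e b := by
    intro a b c hab hbc hac hnab
    have hbr : b ≠ r := by
      rw [← hne_r]
      have h1 : (σ.symm a).val < (σ.symm b).val := hab
      omega
    have hnonb : (parentsF G r b).Nonempty := hparents_ne b (hdist_ne b hbr)
    obtain ⟨pb, hpb, hpbeq⟩ := hmpT_eq b hnonb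
    rw [mem_parentsF] at hpb
    rcases Nat.lt_or_ge (G.dist r pb) (G.dist r a) with hcase | hcase
    · exact ⟨pb, by rw [hlt, key_lt]; exact Or.inl hcase, hpb.1⟩
    · have hab_d : G.dist r a ≤ G.dist r b := by
        have := (hlt a b).mp hab
        rw [key_lt] at this
        omega
      have hbc_d : G.dist r b ≤ G.dist r c := by
        have := (hlt b c).mp hbc
        rw [key_lt] at this
        omega
      have hca_d : G.dist r c ≤ G.dist r a + 1 := adj_dist_le hG hac
      have hdb : G.dist r b = G.dist r a + 1 := by omega
      have hdc : G.dist r c = G.dist r a + 1 := by omega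
      have hbc_ne : b ≠ c := fun h => by rw [h] at hbc; exact lt_irrefl _ hbc
      have hrbc : rnk G r idx b < rnk G r idx c := by
        have := (hlt b c).mp hbc
        rw [key_lt] at this
        omega
      have hkbc : keyLt G r idx b c := (rnk_lt_iff hidx (by omega) hbc_ne).mp hrbc
      have hmbc : mpT G r idx b ≤ mpT G r idx c := by
        rw [keyLt] at hkbc
        omega
      have hamem : a ∈ parentsF G r c := mem_parentsF.mpr ⟨hac, by omega⟩
      have h1 : mpT G r idx c ≤ rnk G r idx a := hmpT_le _ _ hamem
      have hpba : pb ≠ a := fun h => hnab (h ▸ hpb.1)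
      have hrpa : rnk G r idx pb ≠ rnk G r idx a := fun h => hpba (rnk_inj hidx (by omega) h)
      refine ⟨pb, ?_, hpb.1⟩
      rw [hlt, key_lt]
      exact Or.inr ⟨by omega, by omega⟩
  -- LBranchLeaf
  refine ⟨⟨hGS, hBFS⟩, ?_, ?_⟩
  · rw [hne_r]
    exact hvr
  · intro w hLP
    obtain ⟨hw0, hadj, hvw, hlast⟩ := hLP
    have hdvw : G.dist r v ≤ G.dist r w := by
      have := (hlt v w).mp hvw
      rw [key_lt] at this
      omega
    have h2 : G.dist r w ≤ G.dist r v + 1 := adj_dist_le hG hadj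
    have h3 : G.dist r v ≠ G.dist r w := adj_dist_ne hG hbip r hadj
    have hdw : G.dist r w = G.dist r v + 1 := by omega
    have hwv : w ≠ v := fun h => (h ▸ hadj).ne rfl
    obtain ⟨hreach, hdist⟩ := H w hwv
    obtain ⟨q, hq⟩ := hreach.exists_walk_length_eq_dist
    let W : G.Walk r w := (q.map (SimpleGraph.Embedding.induce {u : V | u ≠ v}).toHom).copy rfl rfl
    have hWlen : W.length = G.dist r w := by
      show (q.map _).length = _
      rw [Walk.length_map, hq, hdist]
    have hWd : W.length = G.dist r v + 1 := by omega
    set u : V := W.getVert (G.dist r v) with hu_def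
    have hu_d : G.dist r u = G.dist r v := shortest_getVert hG hWlen (by omega)
    have hu_adj : G.Adj u w := by
      have := W.adj_getVert_succ (i := G.dist r v) (by omega)
      rwa [show G.dist r v + 1 = W.length by omega, Walk.getVert_length] at this
    have hu_ne : u ≠ v := by
      have hmem : u ∈ W.support :=
        Walk.mem_support_iff_exists_getVert.mpr ⟨G.dist r v, rfl, by omega⟩
      replace hmem : u ∈ (q.map (SimpleGraph.Embedding.induce {u : V | u ≠ v}).toHom).support := hmem
      rw [Walk.support_map] at hmem
      obtain ⟨x, hx1, hx2⟩ := List.mem_map.mp hmem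
      rw [← hx2]
      exact x.prop
    have hpv : p.getVert p.length = v := Walk.getVert_length p
    have hkey : keyLt G r idx v u := by
      have := humin p.length u (le_refl _) (by omega) (by rw [hpv]; exact hu_ne)
      rwa [hpv] at this
    have hrvu : rnk G r idx v < rnk G r idx u :=
      (rnk_lt_iff hidx (by omega) (Ne.symm hu_ne)).mpr hkey
    have h1' : σ.symm v < σ.symm u := by
      rw [hlt, key_lt]
      exact Or.inr ⟨by omega, hrvu⟩
    have h2' : σ.symm u < σ.symm w := by
      rw [hlt, key_lt]
      exact Or.inl (by omega)
    exact absurd (hlast u hu_adj h2') (not_le.mpr h1')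


end Bwd

end Stmt12

/-- For a connected bipartite graph with at least two vertices, `v` is an
L-branch leaf of some BFS ordering iff there is a vertex `r ≠ v` such that deleting `v`
preserves all distances from `r`. -/
theorem stmt12 [Fintype V] (G : SimpleGraph V)
    (hG : G.Connected) (hbip : G.Colorable 2) (hn : 2 ≤ Fintype.card V) (v : V) :
    (∃ σ : Fin (Fintype.card V) ≃ V, IsBFSOrdering G σ ∧ LBranchLeaf G σ v) ↔
      ∃ r : V, ∃ hr : r ≠ v, ∀ w : V, ∀ hw : w ≠ v,
        (G.induce {u : V | u ≠ v}).Reachable ⟨r, hr⟩ ⟨w, hw⟩ ∧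
        (G.induce {u : V | u ≠ v}).dist ⟨r, hr⟩ ⟨w, hw⟩ = G.dist r w := by
  constructor
  · rintro ⟨σ, hb, hl⟩
    exact Stmt12.forward hG hbip (by omega) hb hl
  · rintro ⟨r, hr, H⟩
    exact Stmt12.backward hG hbip hn v r hr H
end

section
/- Let G be a connected chordal finite simple graph with at least 2 vertices and let v be a vertex of G. Then v is an L-branch leaf of some perfect elimination ordering of G if and only if v is simplicial. -/
open SimpleGraph

variable {V : Type*}

namespace Stmt13Aux

section
variable {V : Type*}

section
variable {G : SimpleGraph V}

/-- Reachability within a vertex set `T`. -/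
def ReachIn (G : SimpleGraph V) (T : Set V) (a b : V) : Prop :=
  ∃ w : G.Walk a b, ∀ x ∈ w.support, x ∈ T

lemma ReachIn.refl {T : Set V} {a : V} (ha : a ∈ T) : ReachIn G T a a :=
  ⟨SimpleGraph.Walk.nil, by simp [ha]⟩

lemma ReachIn.symm {T : Set V} {a b : V} : ReachIn G T a b → ReachIn G T b a := by
  rintro ⟨w, hw⟩
  exact ⟨w.reverse, by simpa using hw⟩

lemma ReachIn.trans {T : Set V} {a b c : V} :
    ReachIn G T a b → ReachIn G T b c → ReachIn G T a c := by
  rintro ⟨w1, h1⟩ ⟨w2, h2⟩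
  refine ⟨w1.append w2, fun x hx => ?_⟩
  rcases (SimpleGraph.Walk.mem_support_append_iff _ _).1 hx with h | h
  exacts [h1 x h, h2 x h]

lemma ReachIn.mem_right {T : Set V} {a b : V} (h : ReachIn G T a b) : b ∈ T :=
  h.choose_spec b h.choose.end_mem_support

lemma ReachIn.adj_extend {T : Set V} {a b c : V} (h : ReachIn G T a b) (hadj : G.Adj b c)
    (hc : c ∈ T) : ReachIn G T a c := by
  obtain ⟨w, hw⟩ := h
  refine ⟨w.append (SimpleGraph.Walk.cons hadj SimpleGraph.Walk.nil), fun x hx => ?_⟩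
  rcases (SimpleGraph.Walk.mem_support_append_iff _ _).1 hx with h | h
  · exact hw x h
  · simp at h
    rcases h with rfl | rfl
    · exact hw _ w.end_mem_support
    · exact hc

lemma edge_mem_of_length_one {c d : V} (w : G.Walk c d) (h : w.length = 1) :
    s(c, d) ∈ w.edges := by
  cases w with
  | nil => simp at h
  | cons h' w' =>
    cases w' with
    | nil => simp
    | cons h'' w'' => simp [SimpleGraph.Walk.length_cons] at h

lemma exists_min_walk {x y : V} (T : Set V)
    (h : ∃ w : G.Walk x y, ∀ z ∈ w.support, z ∈ T) :
    ∃ p : G.Walk x y, p.IsPath ∧ (∀ z ∈ p.support, z ∈ T) ∧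
      ∀ q : G.Walk x y, (∀ z ∈ q.support, z ∈ T) → p.length ≤ q.length := by
  classical
  have hn : ∃ n : ℕ, ∃ w : G.Walk x y, w.length = n ∧ ∀ z ∈ w.support, z ∈ T := by
    obtain ⟨w, hw⟩ := h
    exact ⟨w.length, w, rfl, hw⟩
  obtain ⟨w, hwl, hwT⟩ := Nat.find_spec hn
  refine ⟨w.bypass, w.bypass_isPath, fun z hz => hwT z (w.support_bypass_subset hz), ?_⟩
  intro q hq
  calc w.bypass.length ≤ w.length := w.length_bypass_le
    _ = Nat.find hn := hwl
    _ ≤ q.length := Nat.find_min' hn ⟨q, rfl, hq⟩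

lemma no_reach_pair {a b : V} (hab : a ≠ b) (hnadj : ¬ G.Adj a b) {T : Set V}
    (hT : ∀ z ∈ T, z = a ∨ z = b) : ¬ ReachIn G T a b := by
  rintro ⟨w, hw⟩
  cases w with
  | nil => exact hab rfl
  | @cons _ c _ h p =>
    have hc : c ∈ T := hw c (by simp)
    rcases hT c hc with rfl | rfl
    · exact G.loopless.irrefl _ h
    · exact hnadj h

end

section
variable [DecidableEq V] {G : SimpleGraph V}

lemma reach_support {T : Set V} {a b : V} (w : G.Walk a b) (hw : ∀ z ∈ w.support, z ∈ T)
    {z : V} (hz : z ∈ w.support) : ReachIn G T a z :=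
  ⟨w.takeUntil z hz, fun x hx => hw x (w.support_takeUntil_subset hz hx)⟩

set_option linter.unusedSectionVars false in
lemma min_walk_chord {x y : V} {T : Set V} (p : G.Walk x y)
    (hp : ∀ z ∈ p.support, z ∈ T)
    (hmin : ∀ q : G.Walk x y, (∀ z ∈ q.support, z ∈ T) → p.length ≤ q.length)
    {c d : V} (hc : c ∈ p.support) (hd : d ∈ p.support) (hadj : G.Adj c d) :
    s(c, d) ∈ p.edges := by
  by_contra hne
  have hspec := p.take_spec hc
  have hd' : d ∈ (p.takeUntil c hc).support ∨ d ∈ (p.dropUntil c hc).support := by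
    rw [← SimpleGraph.Walk.mem_support_append_iff, hspec]; exact hd
  have hplen : p.length = (p.takeUntil c hc).length + (p.dropUntil c hc).length := by
    conv_lhs => rw [← hspec]
    rw [SimpleGraph.Walk.length_append]
  rcases hd' with hdQ | hdR
  · set Q := p.takeUntil c hc with hQdef
    have hspecQ := Q.take_spec hdQ
    have hQlen : Q.length = (Q.takeUntil d hdQ).length + (Q.dropUntil d hdQ).length := by
      conv_lhs => rw [← hspecQ]
      rw [SimpleGraph.Walk.length_append]
    set q : G.Walk x y :=
      (Q.takeUntil d hdQ).append (SimpleGraph.Walk.cons hadj.symm (p.dropUntil c hc))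
    have hqT : ∀ z ∈ q.support, z ∈ T := by
      intro z hz
      rcases (SimpleGraph.Walk.mem_support_append_iff _ _).1 hz with h | h
      · exact hp z (p.support_takeUntil_subset hc (Q.support_takeUntil_subset hdQ h))
      · rw [SimpleGraph.Walk.support_cons] at h
        rcases List.mem_cons.1 h with rfl | h
        · exact hp z (p.support_takeUntil_subset hc hdQ)
        · exact hp z (p.support_dropUntil_subset hc h)
    have hlq := hmin q hqT
    have hql : q.length = (Q.takeUntil d hdQ).length + ((p.dropUntil c hc).length + 1) := by
      simp [q, SimpleGraph.Walk.length_append, SimpleGraph.Walk.length_cons]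
    have h2 : (Q.dropUntil d hdQ).length ≤ 1 := by omega
    have h0 : (Q.dropUntil d hdQ).length ≠ 0 := by
      intro h0
      exact hadj.ne (SimpleGraph.Walk.eq_of_length_eq_zero h0).symm
    have h1 : (Q.dropUntil d hdQ).length = 1 := by omega
    have := edge_mem_of_length_one _ h1
    rw [Sym2.eq_swap] at this
    exact hne (p.edges_takeUntil_subset hc (Q.edges_dropUntil_subset hdQ this))
  · set R := p.dropUntil c hc with hRdef
    have hspecR := R.take_spec hdR
    have hRlen : R.length = (R.takeUntil d hdR).length + (R.dropUntil d hdR).length := by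
      conv_lhs => rw [← hspecR]
      rw [SimpleGraph.Walk.length_append]
    set q : G.Walk x y :=
      (p.takeUntil c hc).append (SimpleGraph.Walk.cons hadj (R.dropUntil d hdR))
    have hqT : ∀ z ∈ q.support, z ∈ T := by
      intro z hz
      rcases (SimpleGraph.Walk.mem_support_append_iff _ _).1 hz with h | h
      · exact hp z (p.support_takeUntil_subset hc h)
      · rw [SimpleGraph.Walk.support_cons] at h
        rcases List.mem_cons.1 h with rfl | h
        · exact hp z (p.support_dropUntil_subset hc R.start_mem_support)
        · exact hp z (p.support_dropUntil_subset hc (R.support_dropUntil_subset hdR h))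
    have hlq := hmin q hqT
    have hql : q.length = (p.takeUntil c hc).length + ((R.dropUntil d hdR).length + 1) := by
      simp [q, SimpleGraph.Walk.length_append, SimpleGraph.Walk.length_cons]
    have h2 : (R.takeUntil d hdR).length ≤ 1 := by omega
    have h0 : (R.takeUntil d hdR).length ≠ 0 := by
      intro h0
      exact hadj.ne (SimpleGraph.Walk.eq_of_length_eq_zero h0)
    have h1 : (R.takeUntil d hdR).length = 1 := by omega
    have := edge_mem_of_length_one _ h1
    exact hne (p.edges_dropUntil_subset hc (R.edges_takeUntil_subset hdR this))

lemma exists_adj_reach {T : Set V} {x a b : V} (hax : a ≠ x)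
    (W : G.Walk a b) (hW : ∀ y ∈ W.support, y ∈ T ∨ y = x) (hx : x ∈ W.support) :
    ∃ c, G.Adj x c ∧ ReachIn G T a c := by
  have hcount := W.count_support_takeUntil_eq_one hx
  set Q := W.takeUntil x hx with hQdef
  have hQnil : ¬ Q.reverse.Nil := SimpleGraph.Walk.not_nil_of_ne (fun h => hax h.symm)
  obtain ⟨c, h', q, hEq⟩ := SimpleGraph.Walk.not_nil_iff.1 hQnil
  have hsup : Q.support.reverse = x :: q.support := by
    rw [← SimpleGraph.Walk.support_reverse, hEq, SimpleGraph.Walk.support_cons]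
  have hxq : x ∉ q.support := by
    have : (Q.support.reverse).count x = 1 := by rw [List.count_reverse]; exact hcount
    rw [hsup] at this
    simp only [List.count_cons_self] at this
    exact List.count_eq_zero.1 (by omega)
  have hqT : ∀ z ∈ q.support, z ∈ T := by
    intro z hz
    have hzQ : z ∈ Q.support := by
      rw [← List.mem_reverse, hsup]; exact List.mem_cons_of_mem _ hz
    rcases hW z (W.support_takeUntil_subset hx hzQ) with h | rfl
    · exact h
    · exact absurd hz hxq
  exact ⟨c, h', q.reverse, by simpa using hqT⟩

set_option linter.unusedSectionVars false in
lemma sep_clique (hch : IsChordal G) {T : Set V} {a b : V}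
    (hsep : ¬ ReachIn G T a b)
    {x y : V} (hxT : x ∉ T) (hyT : y ∉ T) (hax : a ≠ x) (hbx : b ≠ x)
    (hay : a ≠ y) (hby : b ≠ y)
    (hmx : ∃ W : G.Walk a b, (∀ z ∈ W.support, z ∈ T ∨ z = x))
    (hmy : ∃ W : G.Walk a b, (∀ z ∈ W.support, z ∈ T ∨ z = y))
    (hne : x ≠ y) : G.Adj x y := by
  by_contra hnadj
  set A : Set V := {c | ReachIn G T a c} with hAdef
  set B : Set V := {c | ReachIn G T b c} with hBdef
  have hAB : ∀ c, c ∈ A → c ∈ B → False := fun c hca hcb => hsep (hca.trans hcb.symm)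
  have hAT : ∀ c, c ∈ A → c ∈ T := fun c hc => hc.mem_right
  have hBT : ∀ c, c ∈ B → c ∈ T := fun c hc => hc.mem_right
  have hcross : ∀ u w, u ∈ A → w ∈ B → ¬ G.Adj u w := by
    intro u w hu hw hadj
    exact hAB w (hu.adj_extend hadj (hBT w hw)) hw
  have key : ∀ (u : V), u ∉ T → a ≠ u → b ≠ u →
      (∃ W : G.Walk a b, (∀ z ∈ W.support, z ∈ T ∨ z = u)) →
      (∃ c, G.Adj u c ∧ c ∈ A) ∧ (∃ c, G.Adj u c ∧ c ∈ B) := by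
    rintro u huT hau hbu ⟨W, hW⟩
    have hxW : u ∈ W.support := by
      by_contra h
      exact hsep ⟨W, fun z hz => (hW z hz).resolve_right (fun e => h (e ▸ hz))⟩
    constructor
    · obtain ⟨c, h1, h2⟩ := exists_adj_reach hau W hW hxW
      exact ⟨c, h1, h2⟩
    · obtain ⟨c, h1, h2⟩ := exists_adj_reach hbu W.reverse
        (by simpa using hW) (by simpa using hxW)
      exact ⟨c, h1, h2⟩
  obtain ⟨⟨ax, haxadj, haxA⟩, ⟨bx, hbxadj, hbxB⟩⟩ := key x hxT hax hbx hmx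
  obtain ⟨⟨ay, hayadj, hayA⟩, ⟨by', hbyadj, hbyB⟩⟩ := key y hyT hay hby hmy
  have hApath : ∀ (u w : V) (hu : G.Adj x u) (hw : G.Adj y w) (huA : u ∈ A) (hwA : w ∈ A),
      ∃ W : G.Walk x y, ∀ z ∈ W.support, z ∈ A ∪ {x, y} := by
    intro u w hu hw huA hwA
    obtain ⟨W1, hW1⟩ := huA
    obtain ⟨W2, hW2⟩ := hwA
    refine ⟨SimpleGraph.Walk.cons hu ((W1.reverse.append W2).append
      (SimpleGraph.Walk.cons hw.symm SimpleGraph.Walk.nil)), ?_⟩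
    intro z hz
    rw [SimpleGraph.Walk.support_cons] at hz
    rcases List.mem_cons.1 hz with rfl | hz
    · right; left; rfl
    rcases (SimpleGraph.Walk.mem_support_append_iff _ _).1 hz with hz | hz
    · rcases (SimpleGraph.Walk.mem_support_append_iff _ _).1 hz with hz | hz
      · left; exact reach_support W1 hW1 (by simpa using hz)
      · left; exact reach_support W2 hW2 hz
    · simp only [SimpleGraph.Walk.support_cons, SimpleGraph.Walk.support_nil] at hz
      rcases List.mem_cons.1 hz with rfl | hz
      · left; exact ⟨W2, hW2⟩
      · right; right; simpa using hz
  have hBpath : ∀ (u w : V) (hu : G.Adj x u) (hw : G.Adj y w) (huB : u ∈ B) (hwB : w ∈ B),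
      ∃ W : G.Walk x y, ∀ z ∈ W.support, z ∈ B ∪ {x, y} := by
    intro u w hu hw huB hwB
    obtain ⟨W1, hW1⟩ := huB
    obtain ⟨W2, hW2⟩ := hwB
    refine ⟨SimpleGraph.Walk.cons hu ((W1.reverse.append W2).append
      (SimpleGraph.Walk.cons hw.symm SimpleGraph.Walk.nil)), ?_⟩
    intro z hz
    rw [SimpleGraph.Walk.support_cons] at hz
    rcases List.mem_cons.1 hz with rfl | hz
    · right; left; rfl
    rcases (SimpleGraph.Walk.mem_support_append_iff _ _).1 hz with hz | hz
    · rcases (SimpleGraph.Walk.mem_support_append_iff _ _).1 hz with hz | hz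
      · left; exact reach_support W1 hW1 (by simpa using hz)
      · left; exact reach_support W2 hW2 hz
    · simp only [SimpleGraph.Walk.support_cons, SimpleGraph.Walk.support_nil] at hz
      rcases List.mem_cons.1 hz with rfl | hz
      · left; exact ⟨W2, hW2⟩
      · right; right; simpa using hz
  obtain ⟨PA, hPApath, hPAT, hPAmin⟩ :=
    exists_min_walk (A ∪ {x, y}) (hApath ax ay haxadj hayadj haxA hayA)
  obtain ⟨PB, hPBpath, hPBT, hPBmin⟩ :=
    exists_min_walk (B ∪ {x, y}) (hBpath bx by' hbxadj hbyadj hbxB hbyB)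
  have hPAsub : ∀ z ∈ PA.support, z ∈ A ∨ z = x ∨ z = y := by
    intro z hz
    rcases hPAT z hz with h | h
    · exact Or.inl h
    · right; simpa using h
  have hPBsub : ∀ z ∈ PB.support, z ∈ B ∨ z = x ∨ z = y := by
    intro z hz
    rcases hPBT z hz with h | h
    · exact Or.inl h
    · right; simpa using h
  have hinter : ∀ z, z ∈ PA.support → z ∈ PB.support → z = x ∨ z = y := by
    intro z hzA hzB
    rcases hPAsub z hzA with h | h
    · rcases hPBsub z hzB with h' | h'
      · exact absurd (hAB z h h') (by simp)
      · exact h'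
    · exact h
  have hlen2 : ∀ (P : G.Walk x y), 2 ≤ P.length := by
    intro P
    rcases Nat.lt_or_ge P.length 2 with h | h
    · interval_cases hP : P.length
      · exact absurd (SimpleGraph.Walk.eq_of_length_eq_zero hP) hne
      · exact absurd (P.adj_of_mem_edges (edge_mem_of_length_one P hP)) hnadj
    · exact h
  have hPAlen := hlen2 PA
  have hPBlen := hlen2 PB
  have hAedge : ∀ e, e ∈ PA.edges → e ∈ PB.edges → False := by
    intro e heA heB
    induction e with
    | h u w =>
      have hu : u = x ∨ u = y :=
        hinter u (PA.fst_mem_support_of_mem_edges heA) (PB.fst_mem_support_of_mem_edges heB)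
      have hw : w = x ∨ w = y :=
        hinter w (PA.snd_mem_support_of_mem_edges heA) (PB.snd_mem_support_of_mem_edges heB)
      have hadj : G.Adj u w := PA.adj_of_mem_edges heA
      rcases hu with rfl | rfl <;> rcases hw with rfl | rfl
      · exact G.loopless.irrefl _ hadj
      · exact hnadj hadj
      · exact hnadj hadj.symm
      · exact G.loopless.irrefl _ hadj
  set C : G.Walk x x := PA.append PB.reverse with hCdef
  have hClen : C.length = PA.length + PB.length := by
    simp [hCdef, SimpleGraph.Walk.length_append, SimpleGraph.Walk.length_reverse]
  have hCcyc : C.IsCycle := by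
    constructor
    · constructor
      · constructor
        rw [hCdef, SimpleGraph.Walk.edges_append, SimpleGraph.Walk.edges_reverse]
        refine List.Nodup.append hPApath.isTrail.edges_nodup
          (List.nodup_reverse.2 hPBpath.isTrail.edges_nodup) ?_
        intro e heA heB
        exact hAedge e heA (List.mem_reverse.1 heB)
      · intro h
        rw [h] at hClen
        simp at hClen
        omega
    · have hCsup : C.support = PA.support ++ PB.reverse.support.tail :=
        SimpleGraph.Walk.support_append _ _
      have htail : C.support.tail = PA.support.tail ++ PB.reverse.support.tail := by
        rw [hCsup]
        conv_lhs => rw [PA.support_eq_cons]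
        rfl
      rw [htail]
      have h1 : PA.support.tail.Nodup := by
        have := hPApath.support_nodup
        rw [PA.support_eq_cons] at this
        exact this.of_cons
      have h2 : PB.reverse.support.tail.Nodup := by
        have := hPBpath.reverse.support_nodup
        rw [PB.reverse.support_eq_cons] at this
        exact this.of_cons
      refine List.Nodup.append h1 h2 ?_
      intro z hz1 hz2
      have hzx : z ≠ x := by
        intro rfl'
        subst rfl'
        have := hPApath.support_nodup
        rw [PA.support_eq_cons] at this
        exact (List.nodup_cons.1 this).1 hz1
      have hzy : z ≠ y := by
        intro rfl'
        subst rfl'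
        have := hPBpath.reverse.support_nodup
        rw [PB.reverse.support_eq_cons] at this
        exact (List.nodup_cons.1 this).1 hz2
      have hzA : z ∈ PA.support := by
        rw [PA.support_eq_cons]; exact List.mem_cons_of_mem _ hz1
      have hzB : z ∈ PB.support := by
        have : z ∈ PB.reverse.support := by
          rw [PB.reverse.support_eq_cons]; exact List.mem_cons_of_mem _ hz2
        simpa using this
      rcases hinter z hzA hzB with h | h
      exacts [hzx h, hzy h]
  obtain ⟨c, d, hcC, hdC, hcd, hcdE⟩ := hch C hCcyc (by omega)
  have hmemC : ∀ z, z ∈ C.support → z ∈ PA.support ∨ z ∈ PB.support := by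
    intro z hz
    rcases (SimpleGraph.Walk.mem_support_append_iff _ _).1 hz with h | h
    · exact Or.inl h
    · right; simpa using h
  have hCedges : ∀ e, e ∈ PA.edges ∨ e ∈ PB.edges → e ∈ C.edges := by
    intro e he
    rw [hCdef, SimpleGraph.Walk.edges_append, SimpleGraph.Walk.edges_reverse,
      List.mem_append, List.mem_reverse]
    exact he
  have hcaseA : c ∈ PA.support → d ∈ PA.support → False := fun h1 h2 =>
    hcdE (hCedges _ (Or.inl (min_walk_chord PA hPAT hPAmin h1 h2 hcd)))
  have hcaseB : c ∈ PB.support → d ∈ PB.support → False := fun h1 h2 =>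
    hcdE (hCedges _ (Or.inr (min_walk_chord PB hPBT hPBmin h1 h2 hcd)))
  have honlyA : ∀ z, z ∈ PA.support → z ∉ PB.support → z ∈ A := by
    intro z h1 h2
    rcases hPAsub z h1 with h | rfl | rfl
    · exact h
    · exact absurd PB.start_mem_support h2
    · exact absurd PB.end_mem_support h2
  have honlyB : ∀ z, z ∈ PB.support → z ∉ PA.support → z ∈ B := by
    intro z h1 h2
    rcases hPBsub z h1 with h | rfl | rfl
    · exact h
    · exact absurd PA.start_mem_support h2
    · exact absurd PA.end_mem_support h2
  rcases hmemC c hcC with hcA | hcB <;> rcases hmemC d hdC with hdA | hdB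
  · exact hcaseA hcA hdA
  · by_cases h1 : c ∈ PB.support
    · exact hcaseB h1 hdB
    by_cases h2 : d ∈ PA.support
    · exact hcaseA hcA h2
    exact hcross c d (honlyA c hcA h1) (honlyB d hdB h2) hcd
  · by_cases h1 : d ∈ PB.support
    · exact hcaseB hcB h1
    by_cases h2 : c ∈ PA.support
    · exact hcaseA h2 hdA
    exact hcross d c (honlyA d hdA h1) (honlyB c hcB h2) hcd.symm
  · exact hcaseB hcB hdB

/-- `v` is simplicial within the vertex set `s`. -/
def SimpIn (G : SimpleGraph V) (s : Finset V) (v : V) : Prop :=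
  ∀ y ∈ s, ∀ z ∈ s, G.Adj y v → G.Adj z v → y ≠ z → G.Adj y z

set_option linter.unusedSectionVars false in
lemma side_simp {n : ℕ}
    (IH : ∀ t : Finset V, t.card ≤ n → t.Nonempty →
      (∀ y ∈ t, ∀ z ∈ t, y ≠ z → G.Adj y z) ∨
      ∃ v ∈ t, ∃ w ∈ t, ¬ G.Adj v w ∧ v ≠ w ∧ SimpIn G t v ∧ SimpIn G t w)
    {s S A : Finset V}
    (hScl : ∀ x ∈ S, ∀ y ∈ S, x ≠ y → G.Adj x y)
    (hcard : (A ∪ S).card ≤ n)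
    (hclose : ∀ u ∈ A, ∀ y ∈ s, G.Adj u y → y ∈ A ∪ S)
    (hAne : A.Nonempty) :
    ∃ v ∈ A, SimpIn G s v := by
  rcases IH (A ∪ S) hcard (hAne.mono Finset.subset_union_left) with
    hcomp | ⟨v, hv, w, hw, hnadj, hne, hsv, hsw⟩
  · obtain ⟨v, hv⟩ := hAne
    refine ⟨v, hv, fun y hy z hz hyv hzv hyz => ?_⟩
    exact hcomp y (hclose v hv y hy hyv.symm) z (hclose v hv z hz hzv.symm) hyz
  · have hvw : v ∈ A ∨ w ∈ A := by
      by_contra h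
      push_neg at h
      have hvS : v ∈ S := (Finset.mem_union.1 hv).resolve_left h.1
      have hwS : w ∈ S := (Finset.mem_union.1 hw).resolve_left h.2
      exact hnadj (hScl v hvS w hwS hne)
    rcases hvw with h | h
    · exact ⟨v, h, fun y hy z hz hyv hzv hyz =>
        hsv y (hclose v h y hy hyv.symm) z (hclose v h z hz hzv.symm) hyv hzv hyz⟩
    · exact ⟨w, h, fun y hy z hz hyw hzw hyz =>
        hsw y (hclose w h y hy hyw.symm) z (hclose w h z hz hzw.symm) hyw hzw hyz⟩

lemma dirac_aux (hch : IsChordal G) :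
    ∀ (n : ℕ) (s : Finset V), s.card ≤ n → s.Nonempty →
      (∀ y ∈ s, ∀ z ∈ s, y ≠ z → G.Adj y z) ∨
      ∃ v ∈ s, ∃ w ∈ s, ¬ G.Adj v w ∧ v ≠ w ∧ SimpIn G s v ∧ SimpIn G s w := by
  intro n
  induction n with
  | zero =>
    intro s hc hne
    rw [Nat.le_zero, Finset.card_eq_zero] at hc
    simp [hc] at hne
  | succ n IH =>
    intro s hcard hne
    by_cases hcomp : ∀ y ∈ s, ∀ z ∈ s, y ≠ z → G.Adj y z
    · exact Or.inl hcomp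
    right
    push_neg at hcomp
    obtain ⟨a, ha, b, hb, hab, hnadj⟩ := hcomp
    classical
    have hPex : ∃ S ∈ (s \ {a, b}).powerset, ¬ ReachIn G ↑(s \ S) a b := by
      refine ⟨s \ {a, b}, Finset.mem_powerset_self _, ?_⟩
      refine no_reach_pair hab hnadj ?_
      intro z hz
      have hz' : z ∈ s \ (s \ {a, b}) := hz
      rw [Finset.sdiff_sdiff_self_left] at hz'
      have := (Finset.mem_inter.1 hz').2
      simpa using this
    obtain ⟨S, hSf, hSmin⟩ := Finset.exists_min_image
      (((s \ {a, b}).powerset).filter (fun S => ¬ ReachIn G ↑(s \ S) a b))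
      Finset.card (by
        obtain ⟨S, h1, h2⟩ := hPex
        exact ⟨S, Finset.mem_filter.2 ⟨h1, h2⟩⟩)
    obtain ⟨hSsub', hSsep⟩ := Finset.mem_filter.1 hSf
    have hSsub : S ⊆ s \ {a, b} := Finset.mem_powerset.1 hSsub'
    have hSs : S ⊆ s := hSsub.trans (Finset.sdiff_subset)
    have haS : a ∉ S := by
      intro h
      have := hSsub h
      simp at this
    have hbS : b ∉ S := by
      intro h
      have := hSsub h
      simp at this
    set T : Set V := ↑(s \ S) with hTdef
    have hmemT : ∀ z, z ∈ T ↔ z ∈ s ∧ z ∉ S := by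
      intro z
      simp [hTdef]
    have haT : a ∈ T := (hmemT a).2 ⟨ha, haS⟩
    have hbT : b ∈ T := (hmemT b).2 ⟨hb, hbS⟩
    have hmin : ∀ x ∈ S, ∃ W : G.Walk a b, ∀ z ∈ W.support, z ∈ T ∨ z = x := by
      intro x hx
      by_cases hr : ReachIn G ↑(s \ S.erase x) a b
      · obtain ⟨W, hW⟩ := hr
        refine ⟨W, fun z hz => ?_⟩
        have := hW z hz
        have hz' : z ∈ s ∧ (z ∈ S → z = x) := by simpa using this
        by_cases hzx : z = x
        · exact Or.inr hzx
        · exact Or.inl ((hmemT z).2 ⟨hz'.1, fun hzS => hzx (hz'.2 hzS)⟩)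
      · exfalso
        have hmem : S.erase x ∈ ((s \ {a, b}).powerset).filter
            (fun S => ¬ ReachIn G ↑(s \ S) a b) :=
          Finset.mem_filter.2 ⟨Finset.mem_powerset.2 ((Finset.erase_subset _ _).trans hSsub), hr⟩
        have := hSmin _ hmem
        have hlt : (S.erase x).card < S.card := Finset.card_erase_lt_of_mem hx
        omega
    have hScl : ∀ x ∈ S, ∀ y ∈ S, x ≠ y → G.Adj x y := by
      intro x hx y hy hxy
      have hxT : x ∉ T := fun h => ((hmemT x).1 h).2 hx
      have hyT : y ∉ T := fun h => ((hmemT y).1 h).2 hy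
      exact sep_clique hch hSsep hxT hyT
        (fun h => haS (h ▸ hx)) (fun h => hbS (h ▸ hx))
        (fun h => haS (h ▸ hy)) (fun h => hbS (h ▸ hy))
        (hmin x hx) (hmin y hy) hxy
    set A : Finset V := (s \ S).filter (fun c => ReachIn G T a c) with hAdef
    set B : Finset V := (s \ S).filter (fun c => ReachIn G T b c) with hBdef
    have hmemA : ∀ z, z ∈ A ↔ z ∈ T ∧ ReachIn G T a z := by
      intro z
      simp only [hAdef, Finset.mem_filter]
      rw [hmemT]
      simp
    have hmemB : ∀ z, z ∈ B ↔ z ∈ T ∧ ReachIn G T b z := by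
      intro z
      simp only [hBdef, Finset.mem_filter]
      rw [hmemT]
      simp
    have haA : a ∈ A := (hmemA a).2 ⟨haT, ReachIn.refl haT⟩
    have hbB : b ∈ B := (hmemB b).2 ⟨hbT, ReachIn.refl hbT⟩
    have hABdisj : ∀ c, c ∈ A → c ∈ B → False := fun c h1 h2 =>
      hSsep (((hmemA c).1 h1).2.trans ((hmemB c).1 h2).2.symm)
    have hAs : A ⊆ s := fun z hz => ((hmemT z).1 ((hmemA z).1 hz).1).1
    have hBs : B ⊆ s := fun z hz => ((hmemT z).1 ((hmemB z).1 hz).1).1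
    have hcloseA : ∀ u ∈ A, ∀ y ∈ s, G.Adj u y → y ∈ A ∪ S := by
      intro u hu y hy hadj
      by_cases hyS : y ∈ S
      · exact Finset.mem_union_right _ hyS
      · have hyT : y ∈ T := (hmemT y).2 ⟨hy, hyS⟩
        exact Finset.mem_union_left _ ((hmemA y).2 ⟨hyT, ((hmemA u).1 hu).2.adj_extend hadj hyT⟩)
    have hcloseB : ∀ u ∈ B, ∀ y ∈ s, G.Adj u y → y ∈ B ∪ S := by
      intro u hu y hy hadj
      by_cases hyS : y ∈ S
      · exact Finset.mem_union_right _ hyS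
      · have hyT : y ∈ T := (hmemT y).2 ⟨hy, hyS⟩
        exact Finset.mem_union_left _ ((hmemB y).2 ⟨hyT, ((hmemB u).1 hu).2.adj_extend hadj hyT⟩)
    have hcardA : (A ∪ S).card ≤ n := by
      have hsub : A ∪ S ⊆ s.erase b := by
        intro z hz
        rcases Finset.mem_union.1 hz with h | h
        · exact Finset.mem_erase.2 ⟨fun e => hABdisj b (e ▸ h) hbB, hAs h⟩
        · exact Finset.mem_erase.2 ⟨fun e => hbS (e ▸ h), hSs h⟩
      have := Finset.card_le_card hsub
      rw [Finset.card_erase_of_mem hb] at this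
      omega
    have hcardB : (B ∪ S).card ≤ n := by
      have hsub : B ∪ S ⊆ s.erase a := by
        intro z hz
        rcases Finset.mem_union.1 hz with h | h
        · exact Finset.mem_erase.2 ⟨fun e => hABdisj a haA (e ▸ h), hBs h⟩
        · exact Finset.mem_erase.2 ⟨fun e => haS (e ▸ h), hSs h⟩
      have := Finset.card_le_card hsub
      rw [Finset.card_erase_of_mem ha] at this
      omega
    obtain ⟨v, hvA, hsv⟩ := side_simp IH hScl hcardA hcloseA ⟨a, haA⟩
    obtain ⟨w, hwB, hsw⟩ := side_simp IH hScl hcardB hcloseB ⟨b, hbB⟩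
    refine ⟨v, hAs hvA, w, hBs hwB, ?_, ?_, hsv, hsw⟩
    · intro hadj
      have := hcloseA v hvA w (hBs hwB) hadj
      rcases Finset.mem_union.1 this with h | h
      · exact hABdisj w h hwB
      · exact ((hmemT w).1 ((hmemB w).1 hwB).1).2 h
    · intro e
      exact hABdisj v hvA (e ▸ hwB)

lemma exists_simp (hch : IsChordal G) (s : Finset V) (hne : s.Nonempty) :
    ∃ v ∈ s, SimpIn G s v := by
  rcases dirac_aux hch s.card s le_rfl hne with hcomp | ⟨v, hv, w, hw, _, _, hsv, _⟩
  · obtain ⟨v, hv⟩ := hne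
    exact ⟨v, hv, fun y hy z hz _ _ hyz => hcomp y hy z hz hyz⟩
  · exact ⟨v, hv, hsv⟩

end

/-- An elimination list: each vertex is simplicial among the later ones. -/
def Elim (G : SimpleGraph V) : List V → Prop
  | [] => True
  | v :: l => (∀ y ∈ l, ∀ z ∈ l, G.Adj y v → G.Adj z v → y ≠ z → G.Adj y z) ∧ Elim G l

lemma exists_elim [DecidableEq V] {G : SimpleGraph V} (hch : IsChordal G) :
    ∀ (n : ℕ) (s : Finset V), s.card ≤ n → ∃ l : List V, l.Nodup ∧ l.toFinset = s ∧ Elim G l := by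
  intro n
  induction n with
  | zero =>
    intro s hc
    rw [Nat.le_zero, Finset.card_eq_zero] at hc
    exact ⟨[], by simp [hc, Elim]⟩
  | succ n IH =>
    intro s hc
    rcases s.eq_empty_or_nonempty with rfl | hne
    · exact ⟨[], by simp [Elim]⟩
    obtain ⟨u, hu, hsimp⟩ := exists_simp hch s hne
    obtain ⟨l, hnd, hfin, helim⟩ := IH (s.erase u) (by
      have := Finset.card_erase_of_mem hu
      have := Finset.card_pos.2 hne
      omega)
    refine ⟨u :: l, ?_, ?_, ?_, helim⟩
    · refine List.nodup_cons.2 ⟨fun h => ?_, hnd⟩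
      have : u ∈ s.erase u := hfin ▸ List.mem_toFinset.2 h
      simp at this
    · rw [List.toFinset_cons, hfin, Finset.insert_erase hu]
    · intro y hy z hz
      have hy' : y ∈ s.erase u := hfin ▸ List.mem_toFinset.2 hy
      have hz' : z ∈ s.erase u := hfin ▸ List.mem_toFinset.2 hz
      exact hsimp y (Finset.mem_of_mem_erase hy') z (Finset.mem_of_mem_erase hz')

lemma elim_get {G : SimpleGraph V} (l : List V) (hl : Elim G l) :
    ∀ (i j k : ℕ) (hj : j < l.length) (hk : k < l.length) (hij : i < j) (hik : i < k),
      l[j] ≠ l[k] →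
      G.Adj l[j] (l[i]'(hij.trans hj)) → G.Adj l[k] (l[i]'(hij.trans hj)) →
      G.Adj l[j] l[k] := by
  induction l with
  | nil => intro i j k hj; simp at hj
  | cons v t ih =>
    intro i j k hj hk hij hik hne h1 h2
    simp only [List.length_cons] at hj hk
    obtain ⟨j', rfl⟩ : ∃ j', j = j' + 1 := ⟨j - 1, by omega⟩
    obtain ⟨k', rfl⟩ : ∃ k', k = k' + 1 := ⟨k - 1, by omega⟩
    simp only [List.getElem_cons_succ] at hne h1 h2 ⊢
    cases i with
    | zero =>
      simp only [List.getElem_cons_zero] at h1 h2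
      exact hl.1 _ (List.getElem_mem _) _ (List.getElem_mem _) h1 h2 hne
    | succ i' =>
      simp only [List.getElem_cons_succ] at h1 h2
      exact ih hl.2 i' j' k' (by omega) (by omega) (by omega) (by omega) hne h1 h2

/-- From an elimination list starting at `v` covering all vertices, build a PEO with `v` last. -/
lemma peo_of_elim [Fintype V] [DecidableEq V] (G : SimpleGraph V) (L : List V)
    (hnd : L.Nodup) (hall : ∀ x : V, x ∈ L) (helim : Elim G L) (v : V) (hhead : L.head? = some v)
    (hn : 2 ≤ Fintype.card V) :
    ∃ σ : Fin (Fintype.card V) ≃ V, IsPEO G σ ∧ LBranchLeaf G σ v := by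
  have hlen : L.length = Fintype.card V := by
    classical
    rw [← List.toFinset_card_of_nodup hnd]
    congr 1
    ext x
    simp [hall]
  set eL : Fin L.length ≃ V := hnd.getEquivOfForallMemList L hall with heL
  set σ : Fin (Fintype.card V) ≃ V :=
    (finCongr hlen.symm).trans ((Fin.revPerm).trans eL) with hσ
  have hsymm : ∀ u : V, (σ.symm u : ℕ) = L.length - 1 - (eL.symm u : ℕ) := by
    intro u
    simp [hσ, Fin.val_rev]
    omega
  have hlt : ∀ u w : V, σ.symm u < σ.symm w ↔ (eL.symm w : ℕ) < (eL.symm u : ℕ) := by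
    intro u w
    rw [Fin.lt_def, hsymm, hsymm]
    have h1 := (eL.symm u).isLt
    have h2 := (eL.symm w).isLt
    omega
  have hgetL : ∀ u : V, L[(eL.symm u : ℕ)]'((eL.symm u).isLt) = u := by
    intro u
    conv_rhs => rw [← eL.apply_symm_apply u]
    rw [heL]
    simp [List.Nodup.getEquivOfForallMemList]
  refine ⟨σ, ?_, ?_⟩
  · intro u w₁ w hu hw₁ hne hadj1 hadj2
    rw [hlt] at hu hw₁
    have := elim_get L helim (eL.symm w : ℕ) (eL.symm u : ℕ) (eL.symm w₁ : ℕ)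
      (eL.symm u).isLt (eL.symm w₁).isLt hu hw₁
    rw [hgetL, hgetL, hgetL] at this
    exact this hne hadj1 hadj2
  · have hv0 : (eL.symm v : ℕ) = 0 := by
      have hL0 : 0 < L.length := by omega
      have : L[0]'hL0 = v := by
        cases L with
        | nil => simp at hL0
        | cons a t => simpa using hhead
      have : eL ⟨0, hL0⟩ = v := by
        rw [heL]
        simpa [List.Nodup.getEquivOfForallMemList, List.get_eq_getElem] using this
      rw [← this, Equiv.symm_apply_apply]
    have hvval : (σ.symm v : ℕ) = Fintype.card V - 1 := by
      rw [hsymm, hv0, hlen]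
      omega
    constructor
    · rw [hvval]; omega
    · rintro w ⟨h0, hadj, hltvw, hmax⟩
      have h1 : (σ.symm w : ℕ) < Fintype.card V := (σ.symm w).isLt
      have h2 : (σ.symm v : ℕ) < (σ.symm w : ℕ) := hltvw
      omega

lemma simplicial_of_lbranchleaf [Fintype V] (G : SimpleGraph V)
    (σ : Fin (Fintype.card V) ≃ V) (hpeo : IsPEO G σ) (v : V) (hbl : LBranchLeaf G σ v) :
    G.IsClique (G.neighborSet v) := by
  classical
  have hafter : ∀ w : V, G.Adj v w → σ.symm w < σ.symm v := by
    by_contra h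
    push_neg at h
    set T : Finset V := Finset.univ.filter (fun w => G.Adj v w ∧ σ.symm v < σ.symm w) with hT
    have hTne : T.Nonempty := by
      obtain ⟨w, hadj, hle⟩ := h
      have hne : σ.symm v ≠ σ.symm w := fun e => G.loopless.irrefl v (by
        have := σ.symm.injective e
        exact this ▸ hadj)
      exact ⟨w, Finset.mem_filter.2 ⟨Finset.mem_univ _, hadj, lt_of_le_of_ne hle hne⟩⟩
    obtain ⟨w, hwT, hwmin⟩ := Finset.exists_min_image T (fun w => (σ.symm w : ℕ)) hTne
    obtain ⟨-, hadj, hltvw⟩ := Finset.mem_filter.1 hwT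
    have hnlp := hbl.2 w
    rw [LParent] at hnlp
    push_neg at hnlp
    have h0 : (σ.symm w).val ≠ 0 := by
      have : (σ.symm v : ℕ) < (σ.symm w : ℕ) := hltvw
      omega
    obtain ⟨x, hxadj, hxlt, hxgt⟩ := hnlp h0 hadj hltvw
    have hxv : x ≠ v := fun e => by
      rw [e] at hxgt
      exact lt_irrefl _ hxgt
    have hadjxv : G.Adj x v := hpeo x v w hxlt hltvw hxv hxadj hadj
    have hxT : x ∈ T := Finset.mem_filter.2 ⟨Finset.mem_univ _, hadjxv.symm, hxgt⟩
    have h2 : (σ.symm x : ℕ) < (σ.symm w : ℕ) := hxlt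
    have h3 := hwmin x hxT
    omega
  intro y hy z hz hne
  have hy' : G.Adj v y := hy
  have hz' : G.Adj v z := hz
  exact hpeo y z v (hafter y hy') (hafter z hz') hne hy'.symm hz'.symm

end

end Stmt13Aux

/-- In a connected chordal graph with at least two vertices, `v` is an
L-branch leaf of some perfect elimination ordering iff `v` is simplicial. -/
theorem stmt13 [Fintype V] (G : SimpleGraph V)
    (hG : G.Connected) (hch : IsChordal G) (hn : 2 ≤ Fintype.card V) (v : V) :
    (∃ σ : Fin (Fintype.card V) ≃ V, IsPEO G σ ∧ LBranchLeaf G σ v) ↔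
      G.IsClique (G.neighborSet v) := by
  classical
  constructor
  · rintro ⟨σ, hpeo, hbl⟩
    exact Stmt13Aux.simplicial_of_lbranchleaf G σ hpeo v hbl
  · intro hsimp
    obtain ⟨l, hnd, hfin, helim⟩ :=
      Stmt13Aux.exists_elim hch (Finset.univ.erase v).card (Finset.univ.erase v) le_rfl
    have hvl : v ∉ l := by
      intro h
      have : v ∈ Finset.univ.erase v := hfin ▸ List.mem_toFinset.2 h
      simp at this
    refine Stmt13Aux.peo_of_elim G (v :: l) (List.nodup_cons.2 ⟨hvl, hnd⟩) ?_ ?_ v rfl hn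
    · intro x
      by_cases hx : x = v
      · simp [hx]
      · have : x ∈ Finset.univ.erase v := Finset.mem_erase.2 ⟨hx, Finset.mem_univ _⟩
        exact List.mem_cons_of_mem _ (List.mem_toFinset.1 (hfin ▸ this))
    · refine ⟨?_, helim⟩
      intro y hy z hz hyv hzv hyz
      exact hsimp (hyv.symm : G.Adj v y) (hzv.symm : G.Adj v z) hyz
end

section
/- Let G be a connected chordal finite simple graph with at least 2 vertices and let v be a vertex of G. Then v is an F-branch leaf of some perfect elimination ordering of G if and only if the induced subgraph G[N(v)] has a dominating clique, i.e., there is a clique C ⊆ N(v) such that every vertex of N(v) either belongs to C or is adjacent to some vertex of C. -/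
open SimpleGraph

variable {V : Type*}

namespace Stmt14Aux
open SimpleGraph Walk
attribute [local instance] Classical.propDecidable

variable {V : Type*} {G : SimpleGraph V}

/-- Reachability by a walk whose support stays in `s`. -/
def ReachIn (G : SimpleGraph V) (s : Set V) (x z : V) : Prop :=
  ∃ p : G.Walk x z, ∀ u ∈ p.support, u ∈ s

lemma ReachIn.refl {s : Set V} {x : V} (hx : x ∈ s) : ReachIn G s x x :=
  ⟨Walk.nil, by simp [hx]⟩

lemma ReachIn.mem_right {s : Set V} {x z : V} (h : ReachIn G s x z) : z ∈ s := by
  obtain ⟨p, hp⟩ := h; exact hp z p.end_mem_support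

lemma ReachIn.mem_left {s : Set V} {x z : V} (h : ReachIn G s x z) : x ∈ s := by
  obtain ⟨p, hp⟩ := h; exact hp x p.start_mem_support

lemma ReachIn.symm {s : Set V} {x z : V} (h : ReachIn G s x z) : ReachIn G s z x := by
  obtain ⟨p, hp⟩ := h
  exact ⟨p.reverse, fun u hu => hp u (by simpa [Walk.support_reverse] using hu)⟩

lemma ReachIn.trans {s : Set V} {x z w : V} (h : ReachIn G s x z) (h' : ReachIn G s z w) :
    ReachIn G s x w := by
  obtain ⟨p, hp⟩ := h; obtain ⟨q, hq⟩ := h'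
  exact ⟨p.append q, fun u hu => by
    rcases (Walk.mem_support_append_iff _ _).1 hu with h | h
    · exact hp u h
    · exact hq u h⟩

lemma ReachIn.adj {s : Set V} {x z w : V} (h : ReachIn G s x z) (ha : G.Adj z w)
    (hw : w ∈ s) : ReachIn G s x w := by
  obtain ⟨p, hp⟩ := h
  refine ⟨p.concat ha, fun u hu => ?_⟩
  rw [Walk.support_concat, List.mem_append] at hu
  rcases hu with h | h
  · exact hp u h
  · simp only [List.mem_singleton] at h; subst h; exact hw

/-- every vertex on a walk from `x` staying in `s` is `ReachIn s x ·`. -/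
lemma reachIn_of_mem_support {s : Set V} {x z : V} (p : G.Walk x z)
    (hp : ∀ u ∈ p.support, u ∈ s) {u : V} (hu : u ∈ p.support) : ReachIn G s x u :=
  ⟨p.takeUntil u hu, fun w hw => hp w (p.support_takeUntil_subset hu hw)⟩

/-- A walk of length one has exactly the edge between its endpoints. -/
lemma edges_of_length_one {x y : V} (p : G.Walk x y) (h : p.length = 1) :
    p.edges = [s(x, y)] := by
  cases p with
  | nil => simp at h
  | cons ha q =>
    rename_i c
    simp only [Walk.length_cons] at h
    have h0 : q.length = 0 := by omega
    have hc : c = y := Walk.eq_of_length_eq_zero h0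
    subst hc
    have : q = Walk.nil := Walk.nil_iff_eq_nil.1 (Walk.length_eq_zero_iff.1 h0)
    subst this
    simp

/-- shortcut: a chord on a walk yields a strictly shorter walk with support inside. -/
lemma shortcut {p q x y : V} (W : G.Walk p q) (hx : x ∈ W.support) (hy : y ∈ W.support)
    (hadj : G.Adj x y) (hne : s(x, y) ∉ W.edges) :
    ∃ W' : G.Walk p q, (∀ u ∈ W'.support, u ∈ W.support) ∧ W'.length < W.length := by
  classical
  have hspec := W.take_spec hx
  have hlen : (W.takeUntil x hx).length + (W.dropUntil x hx).length = W.length := by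
    have := congrArg Walk.length hspec; rwa [Walk.length_append] at this
  have hy' : y ∈ (W.takeUntil x hx).support ∨ y ∈ (W.dropUntil x hx).support := by
    have : y ∈ ((W.takeUntil x hx).append (W.dropUntil x hx)).support := by rw [hspec]; exact hy
    exact (Walk.mem_support_append_iff _ _).1 this
  rcases hy' with hy1 | hy2
  · -- y occurs before x
    set q1 := W.takeUntil x hx with hq1
    set t1 := q1.takeUntil y hy1
    set d1 := q1.dropUntil y hy1
    have hd1len : 2 ≤ d1.length := by
      by_contra hlt
      push_neg at hlt
      rcases (by omega : d1.length = 0 ∨ d1.length = 1) with h | h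
      · exact hadj.ne' (Walk.eq_of_length_eq_zero h)
      · have : d1.edges = [s(y, x)] := edges_of_length_one d1 h
        apply hne
        have : s(y, x) ∈ d1.edges := by rw [this]; simp
        have : s(y, x) ∈ W.edges := by
          have h2 : s(y,x) ∈ q1.edges := q1.edges_dropUntil_subset hy1 this
          exact W.edges_takeUntil_subset hx h2
        rwa [Sym2.eq_swap] at this
    have hlen1 : t1.length + d1.length = q1.length := by
      have := congrArg Walk.length (q1.take_spec hy1); rwa [Walk.length_append] at this
    refine ⟨t1.append (Walk.cons hadj.symm (W.dropUntil x hx)), ?_, ?_⟩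
    · intro u hu
      rcases (Walk.mem_support_append_iff _ _).1 hu with h | h
      · exact W.support_takeUntil_subset hx (q1.support_takeUntil_subset hy1 h)
      · rw [Walk.support_cons, List.mem_cons] at h
        rcases h with rfl | h
        · exact hy
        · exact W.support_dropUntil_subset hx h
    · rw [Walk.length_append, Walk.length_cons]
      omega
  · -- y occurs after x
    set q2 := W.dropUntil x hx with hq2
    set t2 := q2.takeUntil y hy2
    set r2 := q2.dropUntil y hy2
    have ht2len : 2 ≤ t2.length := by
      by_contra hlt
      push_neg at hlt
      rcases (by omega : t2.length = 0 ∨ t2.length = 1) with h | h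
      · exact hadj.ne (Walk.eq_of_length_eq_zero h)
      · have : t2.edges = [s(x, y)] := edges_of_length_one t2 h
        apply hne
        have h1 : s(x, y) ∈ t2.edges := by rw [this]; simp
        have h2 : s(x,y) ∈ q2.edges := q2.edges_takeUntil_subset hy2 h1
        exact W.edges_dropUntil_subset hx h2
    have hlen2 : t2.length + r2.length = q2.length := by
      have := congrArg Walk.length (q2.take_spec hy2); rwa [Walk.length_append] at this
    refine ⟨(W.takeUntil x hx).append (Walk.cons hadj r2), ?_, ?_⟩
    · intro u hu
      rcases (Walk.mem_support_append_iff _ _).1 hu with h | h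
      · exact W.support_takeUntil_subset hx h
      · rw [Walk.support_cons, List.mem_cons] at h
        rcases h with rfl | h
        · exact hx
        · exact W.support_dropUntil_subset hx (q2.support_dropUntil_subset hy2 h)
    · rw [Walk.length_append, Walk.length_cons]
      omega



lemma first_hit {s S : Set V} {t : V} :
    ∀ {x y : V} (p : G.Walk x y), (∀ u ∈ p.support, u ∈ s) →
      (∀ u ∈ p.support, u ∈ S → u = t) → t ∈ p.support →
      x = t ∨ ∃ a, ReachIn G (s \ S) x a ∧ G.Adj a t := by
  intro x y p
  induction p with
  | nil =>
    intro _ _ ht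
    left
    simp only [Walk.support_nil, List.mem_singleton] at ht
    exact ht.symm
  | @cons x c y ha q ih =>
    intro hs hS ht
    by_cases hxt : x = t
    · exact Or.inl hxt
    right
    have hxS : x ∉ S := fun h => hxt (hS x (by simp) h)
    have hxs : x ∈ s := hs x (by simp)
    by_cases hct : c = t
    · exact ⟨x, ReachIn.refl ⟨hxs, hxS⟩, hct ▸ ha⟩
    · have ht' : t ∈ q.support := by
        rcases (by simpa using ht : t = x ∨ t ∈ q.support) with h | h
        · exact absurd h.symm hxt
        · exact h
      have hs' : ∀ u ∈ q.support, u ∈ s := fun u hu => hs u (by simp [hu])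
      have hS' : ∀ u ∈ q.support, u ∈ S → u = t := fun u hu => hS u (by simp [hu])
      rcases ih hs' hS' ht' with h | ⟨a, ⟨w, hw⟩, haa⟩
      · exact absurd h hct
      · have hcS : c ∉ S := fun h => hct (hS c (by simp) h)
        have hcs : c ∈ s := hs c (by simp)
        refine ⟨a, ⟨Walk.cons ha w, ?_⟩, haa⟩
        intro u hu
        rcases (by simpa using hu : u = x ∨ u ∈ w.support) with rfl | h
        · exact ⟨hxs, hxS⟩
        · exact hw u h


-- chunk: min_side_path
lemma adj_of_length_one {x y : V} (p : G.Walk x y) (h : p.length = 1) : G.Adj x y :=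
  p.adj_of_mem_edges (by rw [edges_of_length_one p h]; simp)

lemma min_side_path {A : Set V} {p q : V}
    (hpq : ¬ G.Adj p q) (hne : p ≠ q)
    (hconnA : ∀ a ∈ A, ∀ a' ∈ A, ∃ w : G.Walk a a', ∀ u ∈ w.support, u ∈ A)
    {ap aq : V} (hap : ap ∈ A) (hap2 : G.Adj p ap) (haq : aq ∈ A) (haq2 : G.Adj q aq) :
    ∃ WA : G.Walk p q, WA.IsPath ∧ (∀ u ∈ WA.support, u ∈ A ∪ {p, q}) ∧ 2 ≤ WA.length ∧
      ∀ W : G.Walk p q, (∀ u ∈ W.support, u ∈ A ∪ {p, q}) → WA.length ≤ W.length := by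
  classical
  obtain ⟨wm, hwm⟩ := hconnA ap hap aq haq
  have hw1 : ∀ u ∈ (Walk.cons hap2 (wm.concat haq2.symm)).support, u ∈ A ∪ {p, q} := by
    intro u hu
    rcases (by simpa using hu : u = p ∨ u ∈ (wm.concat haq2.symm).support) with rfl | h
    · right; simp
    · rw [Walk.support_concat, List.mem_append] at h
      rcases h with h | h
      · exact Or.inl (hwm u h)
      · right; simp only [List.mem_singleton] at h; simp [h]
  have hex : ∃ n, ∃ W : G.Walk p q, (∀ u ∈ W.support, u ∈ A ∪ {p, q}) ∧ W.length = n :=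
    ⟨_, _, hw1, rfl⟩
  obtain ⟨W1, hW1, hW1l⟩ := Nat.find_spec hex
  have hmin : ∀ W : G.Walk p q, (∀ u ∈ W.support, u ∈ A ∪ {p, q}) → Nat.find hex ≤ W.length := by
    intro W hW
    by_contra hlt
    exact Nat.find_min hex (by omega) ⟨W, hW, rfl⟩
  refine ⟨W1.bypass, W1.bypass_isPath, fun u hu => hW1 u (W1.support_bypass_subset hu), ?_, ?_⟩
  · have h2 : W1.bypass.length ≠ 0 := fun h => hne (Walk.eq_of_length_eq_zero h)
    have h3 : W1.bypass.length ≠ 1 := fun h => hpq (adj_of_length_one _ h)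
    omega
  · intro W hW
    calc W1.bypass.length ≤ W1.length := W1.length_bypass_le
      _ = Nat.find hex := hW1l
      _ ≤ W.length := hmin W hW

lemma sep_sides_adj (hch : IsChordal G) {A B : Set V} {p q : V}
    (hAB : ∀ a ∈ A, ∀ b ∈ B, ¬ G.Adj a b)
    (hABd : ∀ z, ¬(z ∈ A ∧ z ∈ B))
    (hpA : p ∉ A) (hqA : q ∉ A) (hpB : p ∉ B) (hqB : q ∉ B)
    (hne : p ≠ q)
    (hconnA : ∀ a ∈ A, ∀ a' ∈ A, ∃ w : G.Walk a a', ∀ u ∈ w.support, u ∈ A)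
    (hconnB : ∀ b ∈ B, ∀ b' ∈ B, ∃ w : G.Walk b b', ∀ u ∈ w.support, u ∈ B)
    {ap aq bp bq : V} (hap : ap ∈ A) (hap2 : G.Adj p ap) (haq : aq ∈ A) (haq2 : G.Adj q aq)
    (hbp : bp ∈ B) (hbp2 : G.Adj p bp) (hbq : bq ∈ B) (hbq2 : G.Adj q bq) :
    G.Adj p q := by
  classical
  by_contra hpq
  obtain ⟨WA, hWAp, hWAs, hWAl, hWAm⟩ := min_side_path hpq hne hconnA hap hap2 haq haq2
  obtain ⟨WB, hWBp, hWBs, hWBl, hWBm⟩ := min_side_path hpq hne hconnB hbp hbp2 hbq hbq2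
  set c : G.Walk p p := WA.append WB.reverse with hc
  have hclen : c.length = WA.length + WB.length := by
    rw [hc, Walk.length_append, Walk.length_reverse]
  have hmemc : ∀ u, u ∈ c.support ↔ u ∈ WA.support ∨ u ∈ WB.support := by
    intro u
    rw [hc, Walk.mem_support_append_iff, Walk.support_reverse, List.mem_reverse]
  have hedgeA : ∀ e ∈ WA.edges, e ∈ c.edges := by
    intro e he; rw [hc, Walk.edges_append, List.mem_append]; exact Or.inl he
  have hedgeB : ∀ e ∈ WB.edges, e ∈ c.edges := by
    intro e he; rw [hc, Walk.edges_append, List.mem_append]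
    right; rw [Walk.edges_reverse, List.mem_reverse]; exact he
  -- endpoints are on both walks
  have hpWA : p ∈ WA.support := WA.start_mem_support
  have hqWA : q ∈ WA.support := WA.end_mem_support
  have hpWB : p ∈ WB.support := WB.start_mem_support
  have hqWB : q ∈ WB.support := WB.end_mem_support
  -- the cycle
  have hcyc : c.IsCycle := by
    rw [Walk.isCycle_def]
    refine ⟨⟨?_⟩, ?_, ?_⟩
    · -- edges nodup
      rw [hc, Walk.edges_append, List.nodup_append]
      refine ⟨hWAp.isTrail.edges_nodup, ?_, ?_⟩
      · rw [Walk.edges_reverse]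
        exact (List.nodup_reverse).2 hWBp.isTrail.edges_nodup
      · intro e he1 e' he2 hee; subst hee
        rw [Walk.edges_reverse, List.mem_reverse] at he2
        induction e using Sym2.ind with
        | _ u w =>
          have hu1 := WA.fst_mem_support_of_mem_edges he1
          have hw1 := WA.snd_mem_support_of_mem_edges he1
          have hu2 := WB.fst_mem_support_of_mem_edges he2
          have hw2 := WB.snd_mem_support_of_mem_edges he2
          have huw : G.Adj u w := WA.adj_of_mem_edges he1
          have hu : u = p ∨ u = q := by
            rcases hWAs u hu1 with h | h
            · rcases hWBs u hu2 with h' | h'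
              · exact absurd ⟨h, h'⟩ (hABd u)
              · simpa using h'
            · simpa using h
          have hw : w = p ∨ w = q := by
            rcases hWAs w hw1 with h | h
            · rcases hWBs w hw2 with h' | h'
              · exact absurd ⟨h, h'⟩ (hABd w)
              · simpa using h'
            · simpa using h
          rcases hu with rfl | rfl <;> rcases hw with rfl | rfl
          · exact huw.ne rfl
          · exact hpq huw
          · exact hpq huw.symm
          · exact huw.ne rfl
    · -- c ≠ nil
      intro h
      have := congrArg Walk.length h
      rw [hclen] at this
      simp only [Walk.length_nil] at this
      omega
    · -- support tail nodup
      rw [hc, Walk.tail_support_append, List.nodup_append]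
      have hWAnd := hWAp.support_nodup
      have hWBnd' : WB.reverse.support.Nodup := hWBp.reverse.support_nodup
      refine ⟨hWAnd.tail, hWBnd'.tail, ?_⟩
      intro u hu1 u' hu2 huu; subst huu
      have hu1' : u ∈ WA.support := List.mem_of_mem_tail hu1
      have hu2' : u ∈ WB.reverse.support := List.mem_of_mem_tail hu2
      have hunp : u ≠ p := by
        intro rfl'
        subst rfl'
        have := WA.support_eq_cons
        rw [this, List.nodup_cons] at hWAnd
        rw [this] at hu1
        exact hWAnd.1 (by simpa using hu1)
      have hunq : u ≠ q := by
        intro rfl'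
        subst rfl'
        have := WB.reverse.support_eq_cons
        rw [this, List.nodup_cons] at hWBnd'
        rw [this] at hu2
        exact hWBnd'.1 (by simpa using hu2)
      have huA : u ∈ A := by
        rcases hWAs u hu1' with h | h
        · exact h
        · rcases h with h | h
          · exact absurd h hunp
          · exact absurd h hunq
      have huB : u ∈ B := by
        rw [Walk.support_reverse, List.mem_reverse] at hu2'
        rcases hWBs u hu2' with h | h
        · exact h
        · rcases h with h | h
          · exact absurd h hunp
          · exact absurd h hunq
      exact hABd u ⟨huA, huB⟩
  obtain ⟨x, y, hxc, hyc, hxy, hnc⟩ := hch c hcyc (by omega)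
  -- case analyses
  have caseA : ∀ u w : V, G.Adj u w → s(u, w) ∉ c.edges →
      u ∈ WA.support → w ∈ WA.support → False := by
    intro u w hadj hnce hu hw
    have hne' : s(u, w) ∉ WA.edges := fun h => hnce (hedgeA _ h)
    obtain ⟨W', hW's, hW'l⟩ := shortcut WA hu hw hadj hne'
    have := hWAm W' (fun z hz => hWAs z (hW's z hz))
    omega
  have caseB : ∀ u w : V, G.Adj u w → s(u, w) ∉ c.edges →
      u ∈ WB.support → w ∈ WB.support → False := by
    intro u w hadj hnce hu hw
    have hne' : s(u, w) ∉ WB.edges := fun h => hnce (hedgeB _ h)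
    obtain ⟨W', hW's, hW'l⟩ := shortcut WB hu hw hadj hne'
    have := hWBm W' (fun z hz => hWBs z (hW's z hz))
    omega
  have hxc' : (x ∈ WA.support) ∨ (x ∈ WB.support ∧ x ∈ B) := by
    rcases (hmemc x).1 hxc with h | h
    · exact Or.inl h
    · rcases hWBs x h with h' | h'
      · exact Or.inr ⟨h, h'⟩
      · rcases h' with h' | h' <;> (subst h'; exact Or.inl (by assumption))
  have hyc' : (y ∈ WA.support) ∨ (y ∈ WB.support ∧ y ∈ B) := by
    rcases (hmemc y).1 hyc with h | h
    · exact Or.inl h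
    · rcases hWBs y h with h' | h'
      · exact Or.inr ⟨h, h'⟩
      · rcases h' with h' | h' <;> (subst h'; exact Or.inl (by assumption))
  rcases hxc' with hx | ⟨hxB, hxB'⟩ <;> rcases hyc' with hy | ⟨hyB, hyB'⟩
  · exact caseA x y hxy hnc hx hy
  · -- x on A-side, y in B
    rcases hWAs x hx with h | h
    · exact hAB x h y hyB' hxy
    · have hxWB : x ∈ WB.support := by
        rcases h with h | h <;> (subst h; assumption)
      exact caseB x y hxy hnc hxWB hyB
  · rcases hWAs y hy with h | h
    · exact hAB y h x hxB' hxy.symm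
    · have hyWB : y ∈ WB.support := by
        rcases h with h | h <;> (subst h; assumption)
      exact caseB x y hxy hnc hxB hyWB
  · exact caseB x y hxy hnc hxB hyB

def SimplicialIn (G : SimpleGraph V) (s : Set V) (u : V) : Prop :=
  u ∈ s ∧ ∀ ⦃x⦄, x ∈ s → ∀ ⦃y⦄, y ∈ s → G.Adj u x → G.Adj u y → x ≠ y → G.Adj x y

lemma interior_vertex {s : Set V} {x y : V} (p : G.Walk x y) (hp : ∀ u ∈ p.support, u ∈ s)
    (hne : x ≠ y) (hadj : ¬ G.Adj x y) : ∃ u ∈ p.support, u ∈ s ∧ u ≠ x ∧ u ≠ y := by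
  cases p with
  | nil => exact absurd rfl hne
  | @cons _ c _ ha q =>
    by_cases hcy : c = y
    · subst hcy; exact absurd ha hadj
    · exact ⟨c, by simp, hp c (by simp), ha.ne', hcy⟩

lemma dirac (hch : IsChordal G) :
    ∀ (n : ℕ) (s : Finset V), s.card ≤ n → ∀ K : Set V, K ⊆ ↑s → G.IsClique K →
      ∀ a ∈ s, a ∉ K → ∃ u ∈ s, u ∉ K ∧ SimplicialIn G ↑s u := by
  classical
  intro n
  induction n with
  | zero =>
    intro s hs K _ _ a ha _
    rw [Nat.le_zero, Finset.card_eq_zero] at hs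
    subst hs; simp at ha
  | succ n ih =>
    intro s hs K hKs hK a ha haK
    by_cases hcomp : ∀ x ∈ s, ∀ y ∈ s, x ≠ y → G.Adj x y
    · exact ⟨a, ha, haK, Finset.mem_coe.2 ha,
        fun x hx y hy _ _ hxy => hcomp x (Finset.mem_coe.1 hx) y (Finset.mem_coe.1 hy) hxy⟩
    push_neg at hcomp
    obtain ⟨x, hx, y, hy, hxyne, hxy⟩ := hcomp
    set SepP : Finset V → Prop := fun S => (∀ t ∈ S, t ∈ s ∧ t ≠ x ∧ t ≠ y) ∧
      ∀ p : G.Walk x y, (∀ u ∈ p.support, u ∈ (↑s : Set V)) → ∃ u ∈ p.support, u ∈ S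
      with hSepP
    have hsep0 : SepP ((s.erase x).erase y) := by
      constructor
      · intro t ht
        simp only [Finset.mem_erase] at ht
        exact ⟨ht.2.2, ht.2.1, ht.1⟩
      · intro p hp
        obtain ⟨u, hu, hus, hux, huy⟩ := interior_vertex p hp hxyne hxy
        exact ⟨u, hu, Finset.mem_erase.2 ⟨huy, Finset.mem_erase.2 ⟨hux, Finset.mem_coe.1 hus⟩⟩⟩
    have hexS : ∃ k, ∃ S : Finset V, SepP S ∧ S.card = k := ⟨_, _, hsep0, rfl⟩
    obtain ⟨S, hS, hScard⟩ := Nat.find_spec hexS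
    have hSmin : ∀ S' : Finset V, SepP S' → S.card ≤ S'.card := by
      intro S' hS'
      by_contra hlt
      exact Nat.find_min hexS (by omega) ⟨S', hS', rfl⟩
    have hxS : x ∉ S := fun h => (hS.1 x h).2.1 rfl
    have hyS : y ∉ S := fun h => (hS.1 y h).2.2 rfl
    set A : Set V := {z | ReachIn G (↑s \ ↑S) x z} with hA
    set B : Set V := {z | ReachIn G (↑s \ ↑S) y z} with hB
    have hxs' : x ∈ (↑s \ ↑S : Set V) := ⟨hx, by simpa using hxS⟩
    have hys' : y ∈ (↑s \ ↑S : Set V) := ⟨hy, by simpa using hyS⟩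
    have hxA : x ∈ A := ReachIn.refl hxs'
    have hyB : y ∈ B := ReachIn.refl hys'
    have hAsub : A ⊆ (↑s \ ↑S : Set V) := fun z hz => hz.mem_right
    have hBsub : B ⊆ (↑s \ ↑S : Set V) := fun z hz => hz.mem_right
    have hnoxy : ¬ ReachIn G (↑s \ ↑S) x y := by
      rintro ⟨pw, hpw⟩
      obtain ⟨u, hu, huS⟩ := hS.2 pw (fun u hu => (hpw u hu).1)
      exact (hpw u hu).2 (by simpa using huS)
    have hyA : y ∉ A := hnoxy
    have hABdisj : ∀ z, ¬(z ∈ A ∧ z ∈ B) := by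
      rintro z ⟨hzA, hzB⟩
      exact hnoxy (hzA.trans hzB.symm)
    have hAclose : ∀ z ∈ A, ∀ w, G.Adj z w → w ∈ (↑s \ ↑S : Set V) → w ∈ A :=
      fun z hz w haw hw => hz.adj haw hw
    have hBclose : ∀ z ∈ B, ∀ w, G.Adj z w → w ∈ (↑s \ ↑S : Set V) → w ∈ B :=
      fun z hz w haw hw => hz.adj haw hw
    have hABadj : ∀ a' ∈ A, ∀ b' ∈ B, ¬ G.Adj a' b' := by
      intro a' ha' b' hb' hadj
      exact hABdisj b' ⟨hAclose a' ha' b' hadj (hBsub hb'), hb'⟩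
    have hconnA : ∀ a' ∈ A, ∀ a'' ∈ A, ∃ w : G.Walk a' a'', ∀ u ∈ w.support, u ∈ A := by
      intro a' ha' a'' ha''
      obtain ⟨w1, hw1⟩ := ha'
      obtain ⟨w2, hw2⟩ := ha''
      refine ⟨w1.reverse.append w2, fun u hu => ?_⟩
      rcases (Walk.mem_support_append_iff _ _).1 hu with h | h
      · rw [Walk.support_reverse, List.mem_reverse] at h
        exact reachIn_of_mem_support w1 hw1 h
      · exact reachIn_of_mem_support w2 hw2 h
    have hconnB : ∀ b' ∈ B, ∀ b'' ∈ B, ∃ w : G.Walk b' b'', ∀ u ∈ w.support, u ∈ B := by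
      intro b' hb' b'' hb''
      obtain ⟨w1, hw1⟩ := hb'
      obtain ⟨w2, hw2⟩ := hb''
      refine ⟨w1.reverse.append w2, fun u hu => ?_⟩
      rcases (Walk.mem_support_append_iff _ _).1 hu with h | h
      · rw [Walk.support_reverse, List.mem_reverse] at h
        exact reachIn_of_mem_support w1 hw1 h
      · exact reachIn_of_mem_support w2 hw2 h
    have hnbr : ∀ t ∈ S, (∃ a' ∈ A, G.Adj a' t) ∧ (∃ b' ∈ B, G.Adj b' t) := by
      intro t htS
      have hcard : (S.erase t).card < S.card := Finset.card_erase_lt_of_mem htS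
      have hnsep : ¬ SepP (S.erase t) := fun h => by
        have := hSmin _ h; omega
      have hfst : ∀ t' ∈ S.erase t, t' ∈ s ∧ t' ≠ x ∧ t' ≠ y :=
        fun t' ht' => hS.1 t' (Finset.mem_of_mem_erase ht')
      have hnq : ¬ ∀ p : G.Walk x y, (∀ u ∈ p.support, u ∈ (↑s : Set V)) →
          ∃ u ∈ p.support, u ∈ S.erase t := fun hq => hnsep ⟨hfst, hq⟩
      push_neg at hnq
      obtain ⟨p, hpin, hpavoid⟩ := hnq
      have hpavoid' : ∀ u ∈ p.support, u ∈ (↑S : Set V) → u = t := by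
        intro u hu huS
        have := hpavoid u hu
        simp only [Finset.mem_erase] at this
        by_contra hne'
        exact this ⟨hne', by simpa using huS⟩
      have htp : t ∈ p.support := by
        obtain ⟨u, hu, huS⟩ := hS.2 p hpin
        have := hpavoid' u hu (by simpa using huS)
        exact this ▸ hu
      constructor
      · rcases first_hit p hpin hpavoid' htp with h | ⟨a', hra, haa⟩
        · exact absurd (h ▸ htS) hxS
        · exact ⟨a', hra, haa⟩
      · have hpin' : ∀ u ∈ p.reverse.support, u ∈ (↑s : Set V) := by
          intro u hu
          rw [Walk.support_reverse, List.mem_reverse] at hu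
          exact hpin u hu
        have hpavoid'' : ∀ u ∈ p.reverse.support, u ∈ (↑S : Set V) → u = t := by
          intro u hu
          rw [Walk.support_reverse, List.mem_reverse] at hu
          exact hpavoid' u hu
        have htp' : t ∈ p.reverse.support := by
          rw [Walk.support_reverse, List.mem_reverse]; exact htp
        rcases first_hit p.reverse hpin' hpavoid'' htp' with h | ⟨b', hrb, hbb⟩
        · exact absurd (h ▸ htS) hyS
        · exact ⟨b', hrb, hbb⟩
    have hSclique : ∀ t ∈ S, ∀ t' ∈ S, t ≠ t' → G.Adj t t' := by
      intro t ht t' ht' hne'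
      have hnA : ∀ z ∈ (↑S : Set V), z ∉ A := fun z hz h =>
        (hAsub h).2 hz
      have hnB : ∀ z ∈ (↑S : Set V), z ∉ B := fun z hz h =>
        (hBsub h).2 hz
      obtain ⟨⟨a1, ha1, ha1t⟩, ⟨b1, hb1, hb1t⟩⟩ := hnbr t ht
      obtain ⟨⟨a2, ha2, ha2t⟩, ⟨b2, hb2, hb2t⟩⟩ := hnbr t' ht'
      exact sep_sides_adj hch hABadj hABdisj (hnA t (by simpa using ht))
        (hnA t' (by simpa using ht')) (hnB t (by simpa using ht))
        (hnB t' (by simpa using ht')) hne' hconnA hconnB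
        ha1 ha1t.symm ha2 ha2t.symm hb1 hb1t.symm hb2 hb2t.symm
    -- apply induction hypothesis on both sides
    have main : ∀ (z : V) (Z : Set V), z ∈ Z →
        (∀ z' ∈ Z, ReachIn G (↑s \ ↑S) z z') →
        (∀ z' ∈ Z, ∀ w, G.Adj z' w → w ∈ (↑s \ ↑S : Set V) → w ∈ Z) →
        Z ⊆ (↑s \ ↑S : Set V) → (∃ c ∈ s, c ∉ Z ∧ c ∉ S) →
        ∃ u ∈ Z, SimplicialIn G ↑s u := by
      intro z Z hzZ _ hZclose hZsub hc
      set Z' : Finset V := s.filter (fun w => w ∈ Z) with hZ'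
      have hZ'mem : ∀ w, w ∈ Z' ↔ w ∈ Z := by
        intro w
        simp only [hZ', Finset.mem_filter]
        exact ⟨fun h => h.2, fun h => ⟨(hZsub h).1, h⟩⟩
      set s' : Finset V := Z' ∪ S with hs'
      have hsub' : s' ⊆ s := by
        intro w hw
        rcases Finset.mem_union.1 hw with h | h
        · exact (Finset.mem_filter.1 h).1
        · exact (hS.1 w h).1
      obtain ⟨c, hcs, hcZ, hcS⟩ := hc
      have hcs' : c ∉ s' := by
        intro h
        rcases Finset.mem_union.1 h with h | h
        · exact hcZ ((hZ'mem c).1 h)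
        · exact hcS h
      have hcard' : s'.card ≤ n := by
        have h1 : s'.card < s.card := Finset.card_lt_card ⟨hsub', fun h => hcs' (h hcs)⟩
        omega
      have hKs' : (↑S : Set V) ⊆ ↑s' := fun w hw =>
        Finset.mem_coe.2 (Finset.mem_union.2 (Or.inr (Finset.mem_coe.1 hw)))
      have hKcl : G.IsClique (↑S : Set V) := by
        intro t ht t' ht' hne'
        exact hSclique t (by simpa using ht) t' (by simpa using ht') hne'
      have hzs' : z ∈ s' := Finset.mem_union.2 (Or.inl ((hZ'mem z).2 hzZ))
      have hzS : z ∉ (↑S : Set V) := fun h => (hZsub hzZ).2 h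
      obtain ⟨u, hus', huS, husimp⟩ := ih s' hcard' (↑S) hKs' hKcl z hzs' hzS
      have huZ : u ∈ Z := by
        rcases Finset.mem_union.1 hus' with h | h
        · exact (hZ'mem u).1 h
        · exact absurd (by simpa using h) huS
      refine ⟨u, huZ, (hZsub huZ).1, ?_⟩
      intro x' hx' y' hy' hux huy hne'
      have hmem : ∀ w', w' ∈ (↑s : Set V) → G.Adj u w' → w' ∈ (↑s' : Set V) := by
        intro w' hw' hadj
        by_cases hw'S : w' ∈ (↑S : Set V)
        · exact hKs' hw'S
        · have : w' ∈ Z := hZclose u huZ w' hadj ⟨hw', hw'S⟩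
          exact Finset.mem_coe.2 (Finset.mem_union.2 (Or.inl ((hZ'mem w').2 this)))
      exact husimp.2 (hmem x' hx' hux) (hmem y' hy' huy) hux huy hne'
    obtain ⟨u, huA, husimp⟩ := main x A hxA
      (fun z' hz' => hz') hAclose hAsub ⟨y, hy, hyA, hyS⟩
    obtain ⟨w, hwB, hwsimp⟩ := main y B hyB
      (fun z' hz' => hz') hBclose hBsub ⟨x, hx, (fun h => hABdisj x ⟨hxA, h⟩), hxS⟩
    have hnadj : ¬ G.Adj u w := hABadj u huA w hwB
    have hune : u ≠ w := fun h => hABdisj u ⟨huA, h ▸ hwB⟩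
    by_cases huK : u ∈ K
    · have hwK : w ∉ K := fun hwK => hnadj (hK huK hwK hune)
      exact ⟨w, (hBsub hwB).1, hwK, hwsimp⟩
    · exact ⟨u, (hAsub huA).1, huK, husimp⟩

def PEOL (G : SimpleGraph V) (L : List V) : Prop :=
  ∀ i j k : ℕ, ∀ (hi : i < L.length) (hj : j < L.length) (hk : k < L.length),
    i < k → j < k → i ≠ j → G.Adj (L[i]'hi) (L[k]'hk) → G.Adj (L[j]'hj) (L[k]'hk) →
    G.Adj (L[i]'hi) (L[j]'hj)

lemma nodup_getElem_ne {α : Type*} {L : List α} (h : L.Nodup) {i j : ℕ}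
    (hi : i < L.length) (hj : j < L.length) (hne : i ≠ j) : L[i]'hi ≠ L[j]'hj := by
  intro he
  have hinj := List.nodup_iff_injective_get.1 h
  have : (⟨i, hi⟩ : Fin L.length) = ⟨j, hj⟩ := hinj (by simpa using he)
  exact hne (by simpa using this)

lemma peoList (hch : IsChordal G) :
    ∀ (n : ℕ) (s : Finset V), s.card ≤ n → ∀ LK : List V, LK.Nodup →
      (∀ u ∈ LK, u ∈ s) → G.IsClique {u | u ∈ LK} →
      ∃ L : List V, L.Nodup ∧ L.toFinset = s ∧ (∃ R, L = LK ++ R) ∧ PEOL G L := by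
  classical
  intro n
  induction n with
  | zero =>
    intro s hs LK hnd hsub _
    rw [Nat.le_zero, Finset.card_eq_zero] at hs
    subst hs
    have hLK : LK = [] := List.eq_nil_iff_forall_not_mem.2 fun b hb => by simpa using hsub b hb
    subst hLK
    exact ⟨[], List.nodup_nil, by simp, ⟨[], rfl⟩, fun i j k hi _ _ _ _ _ _ _ => by simp at hi⟩
  | succ n ih =>
    intro s hs LK hnd hsub hKcl
    by_cases hall : ∀ b ∈ s, b ∈ LK
    · refine ⟨LK, hnd, ?_, ⟨[], (List.append_nil LK).symm⟩, ?_⟩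
      · ext b
        simp only [List.mem_toFinset]
        exact ⟨fun h => hsub b h, fun h => hall b h⟩
      · intro i j k hi hj hk _ _ hij _ _
        exact hKcl (List.getElem_mem hi) (List.getElem_mem hj) (nodup_getElem_ne hnd hi hj hij)
    · push_neg at hall
      obtain ⟨a, has, haLK⟩ := hall
      obtain ⟨u, hus, huLK, husimp⟩ := dirac hch (n + 1) s hs {u | u ∈ LK}
        (fun b hb => Finset.mem_coe.2 (hsub b hb)) hKcl a has haLK
      have hcard : (s.erase u).card ≤ n := by
        rw [Finset.card_erase_of_mem hus]
        have h1 : 1 ≤ s.card := Finset.card_pos.2 ⟨u, hus⟩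
        omega
      have hsub' : ∀ b ∈ LK, b ∈ s.erase u :=
        fun b hb => Finset.mem_erase.2 ⟨fun h => huLK (h ▸ hb), hsub b hb⟩
      obtain ⟨L', hnd', hfin', ⟨R', hR'⟩, hpeo'⟩ := ih (s.erase u) hcard LK hnd hsub' hKcl
      have huL' : u ∉ L' := fun h => by
        have : u ∈ s.erase u := hfin' ▸ List.mem_toFinset.2 h
        simp at this
      refine ⟨L' ++ [u], ?_, ?_, ⟨R' ++ [u], by rw [hR', List.append_assoc]⟩, ?_⟩
      · rw [List.nodup_append]
        exact ⟨hnd', List.nodup_singleton u, fun b hb b' hb' hbb' => by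
          subst hbb'; simp only [List.mem_singleton] at hb'; exact huL' (hb' ▸ hb)⟩
      · rw [List.toFinset_append, hfin']
        have h1 : ([u] : List V).toFinset = {u} := by simp
        rw [h1]
        ext b
        by_cases hbu : b = u <;> simp [hbu, hus]
      · intro i j k hi hj hk hik hjk hij hadj1 hadj2
        have hlen : (L' ++ [u]).length = L'.length + 1 := by simp
        have hi' : i < L'.length := by
          have := hik; have := hk; rw [hlen] at hk; omega
        have hj' : j < L'.length := by rw [hlen] at hk; omega
        have hgi : (L' ++ [u])[i]'hi = L'[i]'hi' := List.getElem_append_left hi'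
        have hgj : (L' ++ [u])[j]'hj = L'[j]'hj' := List.getElem_append_left hj'
        rw [hgi, hgj]
        by_cases hk' : k < L'.length
        · have hgk : (L' ++ [u])[k]'hk = L'[k]'hk' := List.getElem_append_left hk'
          rw [hgi, hgk] at hadj1
          rw [hgj, hgk] at hadj2
          exact hpeo' i j k hi' hj' hk' hik hjk hij hadj1 hadj2
        · have hkL : k = L'.length := by rw [hlen] at hk; omega
          have hgk : (L' ++ [u])[k]'hk = u := List.getElem_concat_length hkL hk
          rw [hgi, hgk] at hadj1
          rw [hgj, hgk] at hadj2
          have hmem1 : L'[i]'hi' ∈ (↑s : Set V) := by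
            have : L'[i]'hi' ∈ s.erase u := hfin' ▸ List.mem_toFinset.2 (List.getElem_mem hi')
            exact Finset.mem_coe.2 (Finset.mem_of_mem_erase this)
          have hmem2 : L'[j]'hj' ∈ (↑s : Set V) := by
            have : L'[j]'hj' ∈ s.erase u := hfin' ▸ List.mem_toFinset.2 (List.getElem_mem hj')
            exact Finset.mem_coe.2 (Finset.mem_of_mem_erase this)
          exact husimp.2 hmem1 hmem2 hadj1.symm hadj2.symm
            (nodup_getElem_ne hnd' hi' hj' hij)

end Stmt14Aux

/-- In a connected chordal graph with at least two vertices, `v` is an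
F-branch leaf of some perfect elimination ordering iff `G[N(v)]` has a dominating
clique. -/
theorem stmt14 [Fintype V] (G : SimpleGraph V)
    (hG : G.Connected) (hch : IsChordal G) (hn : 2 ≤ Fintype.card V) (v : V) :
    (∃ σ : Fin (Fintype.card V) ≃ V, IsPEO G σ ∧ FBranchLeaf G σ v) ↔
      ∃ C : Set V, C ⊆ G.neighborSet v ∧ G.IsClique C ∧
        ∀ w ∈ G.neighborSet v, w ∈ C ∨ ∃ u ∈ C, G.Adj u w := by
  classical
  constructor
  · -- forward: PEO with F-branch leaf gives dominating clique
    rintro ⟨σ, hPEO, hBL⟩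
    refine ⟨{u | G.Adj v u ∧ σ.symm u < σ.symm v}, ?_, ?_, ?_⟩
    · intro u hu; exact hu.1
    · intro a ha b hb hne
      exact hPEO a b v ha.2 hb.2 hne ha.1.symm hb.1.symm
    · intro w hw
      have hvw : G.Adj v w := hw
      rcases lt_trichotomy (σ.symm w) (σ.symm v) with hlt | heq | hgt
      · exact Or.inl ⟨hvw, hlt⟩
      · exact absurd (σ.symm.injective heq) hvw.ne'
      · right
        have hne0 : (σ.symm w).val ≠ 0 := by
          have h1 : (σ.symm v).val ≠ 0 := hBL.1
          have h2 : (σ.symm v).val < (σ.symm w).val := hgt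
          omega
        have hnall : ¬ ∀ z, G.Adj z w → σ.symm v ≤ σ.symm z :=
          fun hz => hBL.2 w ⟨hne0, hvw, hz⟩
        push_neg at hnall
        obtain ⟨z, hzw, hzlt⟩ := hnall
        have hzv : z ≠ v := fun h => absurd (h ▸ hzlt) (lt_irrefl _)
        have hadj : G.Adj z v := hPEO z v w (hzlt.trans hgt) hgt hzv hzw hvw
        exact ⟨z, ⟨hadj.symm, hzlt⟩, hzw⟩
  · -- backward: dominating clique gives PEO with F-branch leaf
    rintro ⟨C, hCN, hCcl, hCdom⟩
    -- C is nonempty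
    obtain ⟨u0, hu0⟩ := Fintype.exists_ne_of_one_lt_card (by omega) v
    have hNv : ∃ w, G.Adj v w := by
      obtain ⟨p⟩ := hG.preconnected v u0
      cases p with
      | nil => exact absurd rfl hu0
      | cons ha _ => exact ⟨_, ha⟩
    obtain ⟨w0, hw0⟩ := hNv
    have hCne : C.Nonempty := by
      rcases hCdom w0 hw0 with h | ⟨u, huC, _⟩
      · exact ⟨w0, h⟩
      · exact ⟨u, huC⟩
    set CL : List V := (Set.Finite.toFinset (Set.toFinite C)).toList with hCL
    have hCLmem : ∀ b, b ∈ CL ↔ b ∈ C := by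
      intro b
      rw [hCL, Finset.mem_toList, Set.Finite.mem_toFinset]
    have hCLnd : CL.Nodup := Finset.nodup_toList _
    have hvC : v ∉ C := fun h => (hCN h).ne rfl
    have hvCL : v ∉ CL := fun h => hvC ((hCLmem v).1 h)
    set LK : List V := CL ++ [v] with hLK
    have hLKnd : LK.Nodup := by
      rw [hLK, List.nodup_append]
      exact ⟨hCLnd, List.nodup_singleton v, fun b hb b' hb' hbb' => by
        subst hbb'; simp only [List.mem_singleton] at hb'; exact hvCL (hb' ▸ hb)⟩
    have hLKcl : G.IsClique {u | u ∈ LK} := by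
      intro a ha b hb hne
      simp only [hLK, Set.mem_setOf_eq, List.mem_append, List.mem_singleton] at ha hb
      rcases ha with ha | rfl <;> rcases hb with hb | rfl
      · exact hCcl ((hCLmem a).1 ha) ((hCLmem b).1 hb) hne
      · exact ((hCN ((hCLmem a).1 ha))).symm
      · exact hCN ((hCLmem b).1 hb)
      · exact absurd rfl hne
    obtain ⟨L, hnd, hfin, ⟨R, hLR⟩, hpeo⟩ := Stmt14Aux.peoList hch (Fintype.card V)
      Finset.univ (by simp) LK hLKnd (fun u _ => Finset.mem_univ u) hLKcl
    have hlenL : L.length = Fintype.card V := by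
      rw [← List.toFinset_card_of_nodup hnd, hfin, Finset.card_univ]
    set f : Fin (Fintype.card V) → V := fun i => L[(i : ℕ)]'(i.isLt.trans_eq hlenL.symm) with hf
    have hinj : Function.Injective f := by
      intro i j hij
      by_contra hne
      exact Stmt14Aux.nodup_getElem_ne hnd (i.isLt.trans_eq hlenL.symm)
        (j.isLt.trans_eq hlenL.symm) (fun h => hne (Fin.ext h)) hij
    set σ : Fin (Fintype.card V) ≃ V :=
      Equiv.ofBijective f ((Fintype.bijective_iff_injective_and_card f).2 ⟨hinj, by simp⟩)
      with hσ
    have hp : ∀ w : V, ((σ.symm w : Fin (Fintype.card V)) : ℕ) < L.length :=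
      fun w => (σ.symm w).isLt.trans_eq hlenL.symm
    have hget : ∀ w : V, L[((σ.symm w : Fin (Fintype.card V)) : ℕ)]'(hp w) = w :=
      fun w => σ.apply_symm_apply w
    have hidx : ∀ (i : ℕ) (hi : i < L.length),
        ((σ.symm (L[i]'hi) : Fin (Fintype.card V)) : ℕ) = i := by
      intro i hi
      have h1 : σ ⟨i, hi.trans_eq hlenL⟩ = L[i]'hi := rfl
      rw [← h1, Equiv.symm_apply_apply]
    have hposinj : ∀ a b : V,
        ((σ.symm a : Fin (Fintype.card V)) : ℕ) = ((σ.symm b : Fin (Fintype.card V)) : ℕ) →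
          a = b := by
      intro a b hab
      have := hget a
      rw [← this, ← hget b]
      congr 1
    -- location facts
    set m : ℕ := CL.length with hm
    have hmpos : 0 < m := by
      obtain ⟨c, hc⟩ := hCne
      have : c ∈ CL := (hCLmem c).2 hc
      rw [hm]
      exact List.length_pos_iff.2 (fun h => by rw [h] at this; simp at this)
    have hmlt : m + 1 ≤ L.length := by
      have h1 : L.length = CL.length + 1 + R.length := by rw [hLR, hLK]; simp; omega
      omega
    have he : L = CL ++ ([v] ++ R) := by rw [hLR, hLK, List.append_assoc]
    have hLm : ∀ (h : m < L.length), L[m]'h = v := by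
      intro h
      rw [List.getElem_of_eq he h, List.getElem_append_right hm.ge]
      simp [hm]
    have hposv : ((σ.symm v : Fin (Fintype.card V)) : ℕ) = m := by
      have h : m < L.length := by omega
      have := hidx m h
      rw [hLm h] at this
      exact this
    have hCpos : ∀ u ∈ C, ((σ.symm u : Fin (Fintype.card V)) : ℕ) < m := by
      intro u huC
      obtain ⟨i, hi, hCLi⟩ := List.mem_iff_getElem.1 ((hCLmem u).2 huC)
      have hiL : i < L.length := by omega
      have h2 : L[i]'hiL = u := by
        rw [List.getElem_of_eq he hiL, List.getElem_append_left hi]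
        exact hCLi
      have h3 := hidx i hiL
      rw [h2] at h3
      omega
    have hposC : ∀ w : V, ((σ.symm w : Fin (Fintype.card V)) : ℕ) < m → w ∈ C := by
      intro w hw
      have hw' : ((σ.symm w : Fin (Fintype.card V)) : ℕ) < CL.length := hm ▸ hw
      have h1 := hget w
      have hiL : ((σ.symm w : Fin (Fintype.card V)) : ℕ) < L.length := hp w
      have h2 : L[((σ.symm w : Fin (Fintype.card V)) : ℕ)]'hiL =
          CL[((σ.symm w : Fin (Fintype.card V)) : ℕ)]'hw' := by
        rw [List.getElem_of_eq he hiL]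
        exact List.getElem_append_left hw'
      rw [h2] at h1
      rw [← h1]
      exact (hCLmem _).1 (List.getElem_mem hw')
    refine ⟨σ, ?_, ?_, ?_⟩
    · -- PEO
      intro a b c h1 h2 hne hadj1 hadj2
      have h1' : ((σ.symm a : Fin (Fintype.card V)) : ℕ) < ((σ.symm c : Fin _) : ℕ) := h1
      have h2' : ((σ.symm b : Fin (Fintype.card V)) : ℕ) < ((σ.symm c : Fin _) : ℕ) := h2
      have hijne : ((σ.symm a : Fin (Fintype.card V)) : ℕ) ≠ ((σ.symm b : Fin _) : ℕ) :=
        fun h => hne (hposinj a b h)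
      have := hpeo _ _ _ (hp a) (hp b) (hp c) h1' h2' hijne
        (by rw [hget a, hget c]; exact hadj1) (by rw [hget b, hget c]; exact hadj2)
      rwa [hget a, hget b] at this
    · -- v is not first
      rw [hposv]; omega
    · -- v is F-parent of nobody
      rintro w ⟨hw0, hadjvw, hmin⟩
      rcases lt_trichotomy ((σ.symm w : Fin (Fintype.card V)) : ℕ) m with hlt | heq | hgt
      · -- w is in C, but the very first vertex is an earlier neighbor of w
        have hwC : w ∈ C := hposC w hlt
        have h0L : 0 < L.length := by omega
        have hmpos' : 0 < CL.length := hm ▸ hmpos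
        have hc0C : L[0]'h0L ∈ C := by
          have h4 : L[0]'h0L = CL[0]'hmpos' := by
            rw [List.getElem_of_eq he h0L]
            exact List.getElem_append_left hmpos'
          rw [h4]
          exact (hCLmem _).1 (List.getElem_mem hmpos')
        have hc0pos : ((σ.symm (L[0]'h0L) : Fin (Fintype.card V)) : ℕ) = 0 := hidx 0 h0L
        have hc0ne : L[0]'h0L ≠ w := by
          intro h
          rw [h] at hc0pos
          exact hw0 hc0pos
        have hadjc0 : G.Adj (L[0]'h0L) w := hCcl hc0C hwC hc0ne
        have := hmin _ hadjc0
        have hle : ((σ.symm v : Fin (Fintype.card V)) : ℕ) ≤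
            ((σ.symm (L[0]'h0L) : Fin (Fintype.card V)) : ℕ) := this
        rw [hposv, hc0pos] at hle
        omega
      · have hwv : w = v := hposinj w v (by rw [hposv]; exact heq)
        exact G.irrefl (hwv ▸ hadjvw)
      · -- w is after v: use domination
        have hwC : w ∉ C := fun h => by have := hCpos w h; omega
        rcases hCdom w hadjvw with h | ⟨u, huC, huw⟩
        · exact hwC h
        · have := hmin u huw
          have hle : ((σ.symm v : Fin (Fintype.card V)) : ℕ) ≤
              ((σ.symm u : Fin (Fintype.card V)) : ℕ) := this
          have := hCpos u huC
          rw [hposv] at hle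
          omega
end

section
/- Let G be a chordal finite simple graph, let r be a vertex of G, and let i ≥ 1 be a natural number. If x and y are adjacent vertices with dist_G(r,x) = dist_G(r,y) = i, then either every neighbor of x at distance i−1 from r is also a neighbor of y, or every neighbor of y at distance i−1 from r is also a neighbor of x. -/
open SimpleGraph

variable {V : Type*}

/-! Suppose `w ∼ x` and `z ∼ y` lie at distance `i - 1` from `r` with `w ≁ y` and `z ≁ x`.
Going from `x` to `w`, down a shortest path to `r` and up another one to `z` gives an `x`–`z`
walk all of whose vertices other than `x`, `w`, `z` lie at distance `< i - 1` from `r`; a shortest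
such walk is a chordless path. Vertices at distance `< i - 1` are not adjacent to `y`, so closing
this path up with `y` yields a chordless cycle of length at least four. -/

namespace SimpleGraph.Walk

variable {W : Type*} {G : SimpleGraph V} {H : SimpleGraph W} {u v w : V}

theorem isChordless_of_length_eq_dist {p : G.Walk u v} (hp : p.length = G.dist u v) :
    p.IsChordless := by
  rw [isChordless_iff_forall_mem_edges]
  suffices h : ∀ j k, j < k → k ≤ p.length → G.Adj (p.getVert j) (p.getVert k) →
      s(p.getVert j, p.getVert k) ∈ p.edges by
    intro a b ha hb hab
    obtain ⟨j, rfl, hj⟩ := mem_support_iff_exists_getVert.mp ha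
    obtain ⟨k, rfl, hk⟩ := mem_support_iff_exists_getVert.mp hb
    rcases lt_trichotomy j k with hjk | rfl | hkj
    · exact h j k hjk hk hab
    · exact absurd rfl hab.ne
    · rw [Sym2.eq_swap]
      exact h k j hkj hj hab.symm
  intro j k hjk hk hadj
  obtain rfl : k = j + 1 := by
    have := G.dist_le (((p.take j).concat hadj).append (p.drop k))
    simp only [length_append, length_concat, take_length, drop_length] at this
    omega
  exact p.mk_mem_edges_iff_exists.mpr ⟨j, by omega, rfl⟩

theorem dist_lt_of_length_eq_dist {p : G.Walk u v} (hp : p.length = G.dist u v)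
    (hw : w ∈ p.support) (hwv : w ≠ v) : G.dist u w < G.dist u v := by
  classical
  calc G.dist u w ≤ (p.takeUntil w hw).length := G.dist_le _
    _ < p.length := length_takeUntil_lt_length hw hwv
    _ = G.dist u v := hp

theorem IsChordless.map {p : G.Walk u v} (hp : p.IsChordless) (f : G ↪g H) :
    (p.map f.toHom).IsChordless := by
  rw [isChordless_iff_forall_mem_edges] at hp ⊢
  intro a b ha hb hab
  simp only [support_map, List.mem_map] at ha hb
  obtain ⟨a, ha, rfl⟩ := ha
  obtain ⟨b, hb, rfl⟩ := hb
  rw [edges_map]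
  exact List.mem_map_of_mem (f := Sym2.map f.toHom) (hp ha hb (f.map_adj_iff.mp hab))

/-- A shortest walk in the induced subgraph `G[s]` is a chordless path of `G` inside `s`. -/
theorem exists_isPath_isChordless_of_support_subset {s : Set V} (q : G.Walk u v)
    (hq : ∀ x ∈ q.support, x ∈ s) :
    ∃ p : G.Walk u v, p.IsPath ∧ p.IsChordless ∧ ∀ x ∈ p.support, x ∈ s := by
  obtain ⟨p, hp⟩ := (q.induce s hq).reachable.exists_walk_length_eq_dist
  refine ⟨p.map (Embedding.induce s).toHom, (p.isPath_of_length_eq_dist hp).map ?_,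
    (isChordless_of_length_eq_dist hp).map _, ?_⟩
  · exact Subtype.val_injective
  · intro x hx
    have hx' : x ∈ p.support.map (Embedding.induce s).toHom := support_map _ p ▸ hx
    obtain ⟨x, -, rfl⟩ := List.mem_map.mp hx'
    exact x.2

end SimpleGraph.Walk

theorem SimpleGraph.exists_walk_forall_mem_support_dist_lt {G : SimpleGraph V} {r v w : V}
    {n : ℕ} (hv : G.Reachable r v) (hw : G.Reachable r w) (hdv : G.dist r v = n)
    (hdw : G.dist r w = n) :
    ∃ p : G.Walk v w, ∀ x ∈ p.support, x = v ∨ x = w ∨ G.dist r x < n := by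
  obtain ⟨pv, hpv⟩ := hv.exists_walk_length_eq_dist
  obtain ⟨pw, hpw⟩ := hw.exists_walk_length_eq_dist
  refine ⟨pv.reverse.append pw, fun x hx => ?_⟩
  rw [Walk.mem_support_append_iff, Walk.support_reverse, List.mem_reverse] at hx
  rcases hx with hx | hx
  · by_cases hxv : x = v
    · exact .inl hxv
    · exact .inr (.inr (hdv ▸ Walk.dist_lt_of_length_eq_dist hpv hx hxv))
  · by_cases hxw : x = w
    · exact .inr (.inl hxw)
    · exact .inr (.inr (hdw ▸ Walk.dist_lt_of_length_eq_dist hpw hx hxw))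

theorem IsChordal.exists_adj_of_isChordless {G : SimpleGraph V} (hG : IsChordal G) {a b y : V}
    {p : G.Walk a b} (hp : p.IsPath) (hpc : p.IsChordless) (hab : a ≠ b) (hnab : ¬ G.Adj a b)
    (hy : y ∉ p.support) (hya : G.Adj y a) (hyb : G.Adj y b) :
    ∃ v ∈ p.support, v ≠ a ∧ v ≠ b ∧ G.Adj y v := by
  by_contra! hnone
  have hend : ∀ v ∈ p.support, G.Adj y v → v = a ∨ v = b := by
    intro v hv hyv
    by_contra! h
    exact hnone v hv h.1 h.2 hyv
  let c : G.Walk y y := .cons hya (p.concat hyb.symm)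
  have hc : c.IsCycle := by
    refine Walk.cons_isCycle_iff _ _ |>.mpr ⟨hp.concat hy hyb.symm, fun h => ?_⟩
    rw [Walk.edges_concat, List.concat_eq_append, List.mem_append] at h
    rcases h with h | h
    · exact hy (Walk.fst_mem_support_of_mem_edges p h)
    · grind
  have hlen : 2 ≤ p.length :=
    (p.reachable.one_lt_dist_of_ne_of_not_adj hab hnab).trans_le (G.dist_le p)
  obtain ⟨u, w, hu, hw, huw, hnot⟩ := hG c hc (by simp [c]; omega)
  simp only [c, Walk.support_cons, Walk.support_concat, Walk.edges_cons, Walk.edges_concat,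
    List.concat_eq_append, List.mem_cons, List.mem_append, List.not_mem_nil, or_false]
    at hu hw hnot
  replace hu : u = y ∨ u ∈ p.support := by tauto
  replace hw : w = y ∨ w ∈ p.support := by tauto
  push Not at hnot
  obtain ⟨hya', hpe, hby'⟩ := hnot
  rcases hu with rfl | hu <;> rcases hw with rfl | hw
  · exact huw.ne rfl
  · rcases hend w hw huw with rfl | rfl
    · exact hya' rfl
    · exact hby' Sym2.eq_swap
  · rcases hend u hu huw.symm with rfl | rfl
    · exact hya' Sym2.eq_swap
    · exact hby' rfl
  · exact hpe (hpc.mem_edges hu hw huw)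

theorem stmt16_general (G : SimpleGraph V) (hch : IsChordal G)
    (r x y : V) (i : ℕ) (hi : 1 ≤ i)
    (hdx : G.dist r x = i) (hdy : G.dist r y = i) (hxy : G.Adj x y) :
    (∀ w : V, G.Adj x w → G.dist r w = i - 1 → G.Adj y w) ∨
    (∀ w : V, G.Adj y w → G.dist r w = i - 1 → G.Adj x w) := by
  by_contra! ⟨⟨w, hxw, hdw, hyw⟩, ⟨z, hyz, hdz, hxz⟩⟩
  have hrx : G.Reachable r x := .of_dist_ne_zero (by omega)
  have hry : G.Reachable r y := .of_dist_ne_zero (by omega)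
  obtain ⟨q, hq⟩ := exists_walk_forall_mem_support_dist_lt
    (hrx.trans hxw.reachable) (hry.trans hyz.reachable) hdw hdz
  obtain ⟨Q, hQ, hQc, hQS⟩ := (Walk.cons hxw q).exists_isPath_isChordless_of_support_subset
    (s := {v | v = x ∨ v = w ∨ v = z ∨ G.dist r v < i - 1}) (by
      simp only [Walk.support_cons, List.mem_cons]
      rintro v (rfl | hv)
      exacts [.inl rfl, .inr (hq v hv)])
  have hyQ : y ∉ Q.support := fun hy => by
    rcases hQS y hy with rfl | rfl | rfl | h
    · exact hxy.ne rfl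
    all_goals omega
  obtain ⟨v, hvQ, hvx, hvz, hyv⟩ := hch.exists_adj_of_isChordless hQ hQc
    (fun h => by subst h; omega) hxz hyQ hxy.symm hyz
  rcases hQS v hvQ with rfl | rfl | rfl | hv
  · exact hvx rfl
  · exact hyw hyv
  · exact hvz rfl
  · have := hyv.diff_dist_adj (u := r)
    omega

/-- In a chordal graph, if `x` and `y` are adjacent vertices at distance
`i ≥ 1` from `r`, then the neighbors of `x` at distance `i - 1` from `r` are all
neighbors of `y`, or vice versa. -/
theorem stmt16 [Fintype V] (G : SimpleGraph V) (hch : IsChordal G)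
    (r x y : V) (i : ℕ) (hi : 1 ≤ i)
    (hrx : G.Reachable r x) (hry : G.Reachable r y)
    (hdx : G.dist r x = i) (hdy : G.dist r y = i) (hxy : G.Adj x y) :
    (∀ w : V, G.Adj x w → G.dist r w = i - 1 → G.Adj y w) ∨
    (∀ w : V, G.Adj y w → G.dist r w = i - 1 → G.Adj x w) :=
  stmt16_general G hch r x y i hi hdx hdy hxy
end

section
/- Let G be a connected chordal finite simple graph and let v be a vertex of G. For any two vertices x, y in the open neighborhood N(v) of v: x and y are connected in the vertex-deleted graph G − v if and only if they are connected in the induced subgraph G[N(v)], and in that case the distance between x and y in G − v equals the distance between x and y in G[N(v)]. -/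
open SimpleGraph

variable {V : Type*}

section AuxStmt17
variable {W : Type*} {Γ : SimpleGraph W}

private lemma aux_eq_of_length_zero : ∀ {u v : W} (p : Γ.Walk u v), p.length = 0 → u = v
  | _, _, Walk.nil, _ => rfl
  | _, _, Walk.cons _ _, h => by simp at h

private lemma aux_exists_first (P : W → Prop) :
    ∀ {z y : W} (q : Γ.Walk z y), P y → ¬ P z →
      ∃ (w : W) (q1 : Γ.Walk z w) (q2 : Γ.Walk w y), q = q1.append q2 ∧ P w ∧
        ∀ u ∈ q1.support, u ≠ w → ¬ P u := by
  intro z y q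
  induction q with
  | nil => intro hy hz; exact absurd hy hz
  | @cons z z' y h q ih =>
    intro hy hz
    by_cases hz' : P z'
    · refine ⟨z', Walk.cons h Walk.nil, q, rfl, hz', ?_⟩
      intro u hu hne
      simp only [Walk.support_cons, Walk.support_nil, List.mem_cons,
        List.not_mem_nil, or_false] at hu
      rcases hu with rfl | rfl
      · exact hz
      · exact absurd rfl hne
    · obtain ⟨w, q1, q2, heq, hw, hfree⟩ := ih hy hz'
      refine ⟨w, Walk.cons h q1, q2, ?_, hw, ?_⟩
      · rw [Walk.cons_append, heq]
      · intro u hu hne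
        rw [Walk.support_cons, List.mem_cons] at hu
        rcases hu with rfl | hu
        · exact hz
        · exact hfree u hu hne

private lemma aux_geodesic_chordfree :
    ∀ {x y : W} (p : Γ.Walk x y), p.length = Γ.dist x y →
      ∀ a b, a ∈ p.support → b ∈ p.support → Γ.Adj a b → s(a, b) ∈ p.edges := by
  intro x y p
  induction p with
  | nil =>
    intro _ a b ha hb hab
    simp only [Walk.support_nil, List.mem_singleton] at ha hb
    subst ha; subst hb; exact absurd rfl hab.ne
  | @cons x z y h q ih =>
    intro hlen a b ha hb hab
    rw [Walk.length_cons] at hlen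
    classical
    have hq : q.length = Γ.dist z y := by
      have h1 : Γ.dist z y ≤ q.length := dist_le q
      have hr : Γ.Reachable z y := ⟨q⟩
      obtain ⟨m, hm⟩ := hr.exists_walk_length_eq_dist
      have h2 : Γ.dist x y ≤ (Walk.cons h m).length := dist_le _
      rw [Walk.length_cons, hm] at h2
      omega
    have key : ∀ c, c ∈ q.support → Γ.Adj x c → c = z := by
      intro c hc hxc
      have h3 := congrArg Walk.length (q.take_spec hc)
      rw [Walk.length_append] at h3
      have h4 : Γ.dist x y ≤ (Walk.cons hxc (q.dropUntil c hc)).length := dist_le _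
      rw [Walk.length_cons] at h4
      have h5 : (q.takeUntil c hc).length = 0 := by omega
      exact (aux_eq_of_length_zero _ h5).symm
    rw [Walk.support_cons, List.mem_cons] at ha hb
    rcases ha with rfl | ha
    · rcases hb with rfl | hb
      · exact absurd rfl hab.ne
      · have hbz : b = z := key b hb hab
        subst hbz
        rw [Walk.edges_cons]
        exact List.mem_cons_self
    · rcases hb with rfl | hb
      · have haz : a = z := key a ha hab.symm
        subst haz
        rw [Sym2.eq_swap, Walk.edges_cons]
        exact List.mem_cons_self
      · rw [Walk.edges_cons]
        exact List.mem_cons_of_mem _ (ih hq a b ha hb hab)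

private lemma aux_exists_induce_walk {s t : Set W} :
    ∀ {a b : s} (p : (Γ.induce s).Walk a b) (ha : (a : W) ∈ t) (hb : (b : W) ∈ t),
      (∀ u ∈ p.support, (u : W) ∈ t) →
      ∃ q : (Γ.induce t).Walk ⟨↑a, ha⟩ ⟨↑b, hb⟩, q.length = p.length := by
  intro a b p
  induction p with
  | nil => intro ha hb _; exact ⟨Walk.nil, rfl⟩
  | @cons a z b hadj q ih =>
    intro ha hb hmem
    obtain ⟨q', hq'⟩ := ih
      (hmem z (by rw [Walk.support_cons]; exact List.mem_cons_of_mem _ q.start_mem_support))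
      hb
      (fun u hu => hmem u (by rw [Walk.support_cons]; exact List.mem_cons_of_mem _ hu))
    exact ⟨Walk.cons (by exact hadj) q', by exact congrArg (· + 1) hq'⟩

private lemma aux_no_bad_path {V : Type*} {G : SimpleGraph V} (hch : IsChordal G) {v x w : V}
    (hx : G.Adj v x) (hw : G.Adj v w) (r : G.Walk x w) (hr : r.IsPath)
    (hv : v ∉ r.support) (hlen : 2 ≤ r.length)
    (hint : ∀ u ∈ r.support, u ≠ x → u ≠ w → ¬ G.Adj v u)
    (hind : ∀ a b, a ∈ r.support → b ∈ r.support → G.Adj a b → s(a, b) ∈ r.edges) : False := by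
  have hxw : x ≠ w := by
    intro he
    subst he
    have := congrArg Subtype.val (SimpleGraph.Path.loop_eq ⟨r, hr⟩)
    simp only [Path.nil] at this
    rw [this] at hlen
    simp at hlen
  set c : G.Walk v v := Walk.cons hx (r.concat hw.symm) with hc
  have hsupp : c.support = v :: (r.support ++ [v]) := by
    rw [hc, Walk.support_cons, Walk.support_concat]
  have hedges : c.edges = s(v, x) :: (r.edges ++ [s(w, v)]) := by
    rw [hc, Walk.edges_cons, Walk.edges_concat, List.concat_eq_append]
  have hvx' : s(v, x) ∉ r.edges := fun hmem => hv (r.fst_mem_support_of_mem_edges hmem)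
  have hwv' : s(w, v) ∉ r.edges := fun hmem => hv (r.snd_mem_support_of_mem_edges hmem)
  have hcyc : c.IsCycle := by
    refine ⟨⟨⟨?_⟩, ?_⟩, ?_⟩
    · rw [hedges]
      refine List.nodup_cons.mpr ⟨?_, ?_⟩
      · rw [List.mem_append, List.mem_singleton]
        rintro (hmem | hmem)
        · exact hvx' hmem
        · rw [Sym2.eq_iff] at hmem
          rcases hmem with ⟨h1, h2⟩ | ⟨h1, h2⟩
          · exact hw.ne h1
          · exact hxw h2
      · rw [List.nodup_append]
        exact ⟨hr.isTrail.edges_nodup, List.nodup_singleton _,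
          fun e he e' (hmem : e' ∈ [s(w,v)]) => by
            rw [List.mem_singleton] at hmem; subst hmem; rintro rfl; exact hwv' he⟩
    · simp [hc]
    · have : c.support.tail = r.support ++ [v] := by rw [hsupp]; rfl
      rw [this, List.nodup_append]
      exact ⟨hr.support_nodup, List.nodup_singleton _,
        fun u hu u' (hmem : u' ∈ [v]) => by
          rw [List.mem_singleton] at hmem; subst hmem; rintro rfl; exact hv hu⟩
  have hlen4 : 4 ≤ c.length := by
    rw [hc, Walk.length_cons, Walk.length_concat]
    omega
  obtain ⟨a, b, ha, hb, hab, hnot⟩ := hch c hcyc hlen4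
  rw [hsupp] at ha hb
  have hsplit : ∀ u : V, u ∈ v :: (r.support ++ [v]) → u = v ∨ u ∈ r.support := by
    intro u hu
    rcases List.mem_cons.mp hu with h | h
    · exact Or.inl h
    · rcases List.mem_append.mp h with h | h
      · exact Or.inr h
      · exact Or.inl (List.mem_singleton.mp h)
  replace ha := hsplit a ha
  replace hb := hsplit b hb
  have main : ∀ b', b' ∈ r.support → G.Adj v b' → s(v, b') ∈ c.edges := by
    intro b' hb' hvb'
    rw [hedges]
    by_cases hbx : b' = x
    · subst hbx; exact List.mem_cons_self
    by_cases hbw : b' = w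
    · subst hbw
      refine List.mem_cons_of_mem _ (List.mem_append_right _ ?_)
      rw [List.mem_singleton]
      exact Sym2.eq_swap
    · exact absurd hvb' (hint b' hb' hbx hbw)
  rcases ha with rfl | ha
  · rcases hb with rfl | hb
    · exact hab.ne rfl
    · exact hnot (main b hb hab)
  · rcases hb with rfl | hb
    · refine hnot ?_
      rw [Sym2.eq_swap]
      exact main a ha hab.symm
    · refine hnot ?_
      rw [hedges]
      exact List.mem_cons_of_mem _ (List.mem_append_left _ (hind a b ha hb hab))

private lemma aux_geo_supp {V : Type*} {G : SimpleGraph V} (hch : IsChordal G) (v : V) :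
    ∀ {x y : {w : V | w ≠ v}} (p : (G.induce {w : V | w ≠ v}).Walk x y),
      p.IsPath → p.length = (G.induce {w : V | w ≠ v}).dist x y →
      G.Adj v ↑x → G.Adj v ↑y → ∀ u ∈ p.support, G.Adj v ↑u := by
  intro x y p
  induction p with
  | nil =>
    intro _ _ hvx _ u hu
    simp only [Walk.support_nil, List.mem_singleton] at hu
    subst hu; exact hvx
  | @cons x z y h q ih =>
    intro hp hlen hvx hvy u hu
    classical
    rw [Walk.length_cons] at hlen
    have hq : q.length = (G.induce {w : V | w ≠ v}).dist z y := by
      have h1 := dist_le q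
      have hr : (G.induce {w : V | w ≠ v}).Reachable z y := ⟨q⟩
      obtain ⟨m, hm⟩ := hr.exists_walk_length_eq_dist
      have h2 := dist_le (Walk.cons h m)
      rw [Walk.length_cons, hm] at h2
      omega
    by_cases hvz : G.Adj v ↑z
    · rw [Walk.support_cons, List.mem_cons] at hu
      rcases hu with rfl | hu
      · exact hvx
      · exact ih hp.of_cons hq hvz hvy u hu
    · exfalso
      obtain ⟨w, q1, q2, heq, hPw, hfree⟩ :=
        aux_exists_first (fun u : {w : V | w ≠ v} => G.Adj v ↑u) q hvy hvz
      subst heq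
      set r0 : (G.induce {w : V | w ≠ v}).Walk x w := Walk.cons h q1 with hr0
      have hpr : Walk.cons h (q1.append q2) = r0.append q2 := by
        rw [hr0, Walk.cons_append]
      rw [hpr] at hp
      have hr0path : r0.IsPath := hp.of_append_left
      have hr0geo : r0.length = (G.induce {w : V | w ≠ v}).dist x w := by
        have h1 := dist_le r0
        have hr : (G.induce {w : V | w ≠ v}).Reachable x w := ⟨r0⟩
        obtain ⟨m, hm⟩ := hr.exists_walk_length_eq_dist
        have h2 := dist_le (m.append q2)
        rw [Walk.length_append, hm] at h2
        have h3 : (Walk.cons h (q1.append q2)).length = r0.length + q2.length := by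
          rw [hpr, Walk.length_append]
        rw [Walk.length_cons] at h3
        omega
      have hq1pos : 1 ≤ q1.length := by
        rcases Nat.eq_zero_or_pos q1.length with h0 | h0
        · exfalso
          have hzw : z = w := aux_eq_of_length_zero q1 h0
          rw [← hzw] at hPw
          exact hvz hPw
        · exact h0
      have hind0 := aux_geodesic_chordfree r0 hr0geo
      let f : (G.induce {w : V | w ≠ v}) →g G := ⟨Subtype.val, fun {a b} hab => hab⟩
      set rG : G.Walk ↑x ↑w := r0.map f with hrG
      apply aux_no_bad_path hch hvx hPw rG
        (Walk.map_isPath_of_injective Subtype.val_injective hr0path)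
      · intro hmem
        rw [hrG, Walk.support_map] at hmem
        obtain ⟨u', _, hval⟩ := List.mem_map.mp hmem
        exact u'.2 hval
      · rw [hrG, Walk.length_map, hr0, Walk.length_cons]
        omega
      · intro u hu hux huw
        rw [hrG, Walk.support_map] at hu
        obtain ⟨u', hu', rfl⟩ := List.mem_map.mp hu
        rw [hr0, Walk.support_cons, List.mem_cons] at hu'
        rcases hu' with rfl | hu'
        · exact absurd rfl hux
        · exact hfree u' hu' fun he => huw (by rw [he]; rfl)
      · intro a b ha hb hab
        rw [hrG, Walk.support_map] at ha hb
        obtain ⟨a', ha', rfl⟩ := List.mem_map.mp ha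
        obtain ⟨b', hb', rfl⟩ := List.mem_map.mp hb
        have hmem : s(a', b') ∈ r0.edges := hind0 a' b' ha' hb' (by exact hab)
        rw [hrG, Walk.edges_map]
        exact List.mem_map.mpr ⟨_, hmem, Sym2.map_pair_eq _ _ _⟩

end AuxStmt17

/-- In a connected chordal graph, for `x, y ∈ N(v)`: `x` and `y` are
connected in `G - v` iff they are connected in `G[N(v)]`, and in that case the distances
agree. -/
theorem stmt17 [Fintype V] (G : SimpleGraph V) (hG : G.Connected) (hch : IsChordal G)
    (v x y : V) (hx : G.Adj v x) (hy : G.Adj v y) :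
    ((G.induce {w : V | w ≠ v}).Reachable ⟨x, hx.ne'⟩ ⟨y, hy.ne'⟩ ↔
      (G.induce (G.neighborSet v)).Reachable ⟨x, hx⟩ ⟨y, hy⟩) ∧
    ((G.induce {w : V | w ≠ v}).Reachable ⟨x, hx.ne'⟩ ⟨y, hy.ne'⟩ →
      (G.induce {w : V | w ≠ v}).dist ⟨x, hx.ne'⟩ ⟨y, hy.ne'⟩ =
      (G.induce (G.neighborSet v)).dist ⟨x, hx⟩ ⟨y, hy⟩) := by
  have hKH : (G.induce (G.neighborSet v)).Reachable ⟨x, hx⟩ ⟨y, hy⟩ →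
      ∃ p : (G.induce {w : V | w ≠ v}).Walk ⟨x, hx.ne'⟩ ⟨y, hy.ne'⟩,
        p.length = (G.induce (G.neighborSet v)).dist ⟨x, hx⟩ ⟨y, hy⟩ := by
    intro hr
    obtain ⟨m, hm⟩ := hr.exists_walk_length_eq_dist
    obtain ⟨q, hq⟩ := aux_exists_induce_walk m (t := {w : V | w ≠ v}) hx.ne' hy.ne'
      (fun u _ => (u.2 : G.Adj v ↑u).ne')
    exact ⟨q, hq.trans hm⟩
  have hHK : (G.induce {w : V | w ≠ v}).Reachable ⟨x, hx.ne'⟩ ⟨y, hy.ne'⟩ →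
      ∃ q : (G.induce (G.neighborSet v)).Walk ⟨x, hx⟩ ⟨y, hy⟩,
        q.length = (G.induce {w : V | w ≠ v}).dist ⟨x, hx.ne'⟩ ⟨y, hy.ne'⟩ := by
    intro hr
    obtain ⟨p, hpath, hplen⟩ := hr.exists_path_of_dist
    have hsupp := aux_geo_supp hch v p hpath hplen hx hy
    obtain ⟨q, hq⟩ := aux_exists_induce_walk p (t := G.neighborSet v) hx hy
      (fun u hu => hsupp u hu)
    exact ⟨q, hq.trans hplen⟩
  constructor
  · constructor
    · intro hr; obtain ⟨q, _⟩ := hHK hr; exact ⟨q⟩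
    · intro hr; obtain ⟨p, _⟩ := hKH hr; exact ⟨p⟩
  · intro hr
    obtain ⟨q, hq⟩ := hHK hr
    obtain ⟨p, hp⟩ := hKH ⟨q⟩
    have h1 := dist_le p
    have h2 := dist_le q
    omega
end
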